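/- arXiv:1903.08383 — 7 statements merged into one kernel-verified Lean document; each statement's English description precedes it below -/
import Mathlib

section
/- Let T be a tree on n vertices and p a positive integer. Then there exists a subset U of the vertices with |U| ≤ 2n/p such that every connected component of T − U has at most p edges incident to it in T (counting edges inside the component and edges from the component to U). -/
/-!
Weigh a vertex set by its degree sum; a tree on `n` vertices weighs `2(n - 1)`. If a set `A`
weighs more than `p`, take a smallest piece `S ⊆ A` of weight `> p` that meets the rest of `A` only
at one vertex `a`. In a forest a heavy component of `S - a` would be a smaller such piece, so all
components of `S - a` weigh at most `p`. Put `a` into the separator, pay for it with the weight of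
`S`, and recurse on `A \ S`.
-/

open Finset

namespace SimpleGraph

variable {V : Type*} {G : SimpleGraph V}

/-- Reachability in `G[A]`, stated for vertices of `V` rather than of the subtype. -/
def ReachableIn (G : SimpleGraph V) (A : Set V) (x y : V) : Prop :=
  ∃ w : G.Walk x y, ∀ z ∈ w.support, z ∈ A

namespace ReachableIn

variable {A B S : Set V} {x y z : V}

lemma refl (hx : x ∈ A) : G.ReachableIn A x x :=
  ⟨.nil, by simpa using hx⟩

lemma of_adj (hxy : G.Adj x y) (hx : x ∈ A) (hy : y ∈ A) : G.ReachableIn A x y :=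
  ⟨hxy.toWalk, by simp [hx, hy]⟩

lemma symm (h : G.ReachableIn A x y) : G.ReachableIn A y x :=
  let ⟨w, hw⟩ := h
  ⟨w.reverse, by simpa using hw⟩

lemma trans (hxy : G.ReachableIn A x y) (hyz : G.ReachableIn A y z) : G.ReachableIn A x z := by
  obtain ⟨w₁, hw₁⟩ := hxy
  obtain ⟨w₂, hw₂⟩ := hyz
  refine ⟨w₁.append w₂, fun u hu => ?_⟩
  rcases Walk.mem_support_append_iff _ _ |>.1 hu with hu | hu
  exacts [hw₁ u hu, hw₂ u hu]

lemma mem_right (h : G.ReachableIn A x y) : y ∈ A :=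
  let ⟨w, hw⟩ := h
  hw y w.end_mem_support

lemma mono (h : G.ReachableIn A x y) (hAB : A ⊆ B) : G.ReachableIn B x y :=
  let ⟨w, hw⟩ := h
  ⟨w, fun u hu => hAB (hw u hu)⟩

lemma inter_of_forall_not_adj (h : G.ReachableIn A x y) (hx : x ∈ S)
    (hS : ∀ u ∈ A ∩ S, ∀ v ∈ A \ S, ¬ G.Adj u v) : G.ReachableIn (A ∩ S) x y := by
  obtain ⟨w, hw⟩ := h
  induction w with
  | nil => exact refl ⟨hw _ (by simp), hx⟩
  | @cons x m y hxm w ih =>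
    have hxA : x ∈ A := hw x (by simp)
    have hmA : m ∈ A := hw m (by simp)
    have hmS : m ∈ S := by_contra fun hmS => hS x ⟨hxA, hx⟩ m ⟨hmA, hmS⟩ hxm
    exact (of_adj (A := A ∩ S) hxm ⟨hxA, hx⟩ ⟨hmA, hmS⟩).trans
      (ih hmS fun u hu => hw u (by simp [hu]))

end ReachableIn

lemma reachableIn_of_induce {s : Set V} {x y : s} (h : (G.induce s).Reachable x y) :
    G.ReachableIn s x y := by
  obtain ⟨w⟩ := h
  induction w with
  | nil => exact .refl (Subtype.prop _)
  | cons hadj _ ih =>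
    exact (ReachableIn.of_adj (induce_adj.1 hadj) (Subtype.prop _) (Subtype.prop _)).trans ih

lemma IsAcyclic.eq_of_adj_of_reachableIn (hG : G.IsAcyclic) {A : Set V} {a x y : V}
    (hx : G.Adj a x) (hy : G.Adj a y) (hxy : G.ReachableIn A x y) (ha : a ∉ A) : x = y := by
  by_contra hne
  obtain ⟨w, hw⟩ := hxy
  have hbridge := isBridge_iff_forall_walk_mem_edges.1
    (isAcyclic_iff_forall_adj_isBridge.1 hG hx) (.cons hy w.reverse)
  rw [Walk.edges_cons, List.mem_cons, Sym2.eq_iff] at hbridge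
  rcases hbridge with (⟨-, h⟩ | ⟨-, h⟩) | h
  · exact hne h
  · exact hx.ne h.symm
  · exact ha (hw a (by simpa using w.reverse.fst_mem_support_of_mem_edges h))

variable [Fintype V]

open Classical in
noncomputable def componentIn (G : SimpleGraph V) (A : Set V) (v : V) : Finset V :=
  {x | G.ReachableIn A v x}

@[simp]
lemma mem_componentIn {A : Set V} {v x : V} : x ∈ G.componentIn A v ↔ G.ReachableIn A v x := by
  simp [componentIn]

lemma componentIn_subset {A : Set V} {v x : V} (hx : x ∈ G.componentIn A v) : x ∈ A :=
  (mem_componentIn.1 hx).mem_right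

lemma componentIn_mono {A B : Set V} (hAB : A ⊆ B) (v : V) :
    G.componentIn A v ⊆ G.componentIn B v :=
  fun _ hx => mem_componentIn.2 ((mem_componentIn.1 hx).mono hAB)

lemma componentIn_subset_inter {A S : Set V} {v : V} (hv : v ∈ S)
    (hS : ∀ u ∈ A ∩ S, ∀ w ∈ A \ S, ¬ G.Adj u w) :
    G.componentIn A v ⊆ G.componentIn (A ∩ S) v :=
  fun _ hx => mem_componentIn.2 ((mem_componentIn.1 hx).inter_of_forall_not_adj hv hS)

variable [DecidableRel G.Adj]

lemma ncard_incident_le_sum_degree (C : Finset V) :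
    {e ∈ G.edgeSet | ∃ x ∈ C, x ∈ e}.ncard ≤ ∑ x ∈ C, G.degree x := by
  classical
  calc {e ∈ G.edgeSet | ∃ x ∈ C, x ∈ e}.ncard
      ≤ (↑(C.biUnion fun x => G.incidenceFinset x) : Set (Sym2 V)).ncard := by
        refine Set.ncard_le_ncard ?_ (Finset.finite_toSet _)
        rintro e ⟨he, x, hx, hxe⟩
        exact mem_coe.2 (mem_biUnion.2 ⟨x, hx, (G.mem_incidenceFinset x e).2 ⟨he, hxe⟩⟩)
    _ ≤ ∑ x ∈ C, #(G.incidenceFinset x) := by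
        rw [Set.ncard_coe_finset]
        exact card_biUnion_le
    _ = ∑ x ∈ C, G.degree x := by simp only [card_incidenceFinset_eq_degree]

variable [DecidableEq V] (G) (p : ℕ)

structure IsHeavyPendant (A S : Finset V) (a : V) : Prop where
  subset : S ⊆ A
  mem : a ∈ S
  heavy : p < ∑ x ∈ S, G.degree x
  attach : ∀ x ∈ S, ∀ y ∈ A \ S, G.Adj x y → x = a

variable {G p}

namespace IsHeavyPendant

variable {A S : Finset V} {a : V}

lemma self (hA : p < ∑ x ∈ A, G.degree x) (ha : a ∈ A) : G.IsHeavyPendant p A A a :=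
  ⟨subset_rfl, ha, hA, fun _ _ _ hy => absurd (mem_sdiff.1 hy).1 (mem_sdiff.1 hy).2⟩

lemma not_adj (h : G.IsHeavyPendant p A S a) {B : Set V} (hBA : B ⊆ A) (haB : a ∉ B)
    {x y : V} (hx : x ∈ B) (hy : y ∈ B) (hxS : x ∈ S) (hyS : y ∉ S) : ¬ G.Adj x y :=
  fun hxy => haB (h.attach x hxS y (mem_sdiff.2 ⟨hBA hy, hyS⟩) hxy ▸ hx)

lemma componentIn_erase (hG : G.IsAcyclic) (h : G.IsHeavyPendant p A S a) {v : V}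
    (hD : p < ∑ x ∈ G.componentIn ↑(S.erase a) v, G.degree x) :
    ∃ d, G.IsHeavyPendant p A (G.componentIn ↑(S.erase a) v) d := by
  set D := G.componentIn ↑(S.erase a) v
  have hDS : D ⊆ S.erase a := fun x hx => componentIn_subset hx
  have hout : ∀ x ∈ D, ∀ y ∈ A \ D, G.Adj x y → y = a := by
    intro x hx y hy hxy
    by_contra hya
    obtain ⟨hyA, hyD⟩ := mem_sdiff.1 hy
    obtain ⟨hxa, hxS⟩ := mem_erase.1 (hDS hx)
    by_cases hyS : y ∈ S
    · exact hyD (mem_componentIn.2 ((mem_componentIn.1 hx).trans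
        (.of_adj hxy (hDS hx) (mem_erase.2 ⟨hya, hyS⟩))))
    · exact hxa (h.attach x hxS y (mem_sdiff.2 ⟨hyA, hyS⟩) hxy)
  have haD : a ∉ (↑(S.erase a) : Set V) := by simp
  obtain ⟨d₀, hd₀⟩ : D.Nonempty := nonempty_of_sum_ne_zero (p.zero_le.trans_lt hD).ne'
  by_cases hadj : ∃ d ∈ D, G.Adj d a
  · obtain ⟨d, hd, hda⟩ := hadj
    refine ⟨d, (hDS.trans (erase_subset a S)).trans h.subset, hd, hD,
      fun x hx y hy hxy => ?_⟩
    obtain rfl := hout x hx y hy hxy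
    exact hG.eq_of_adj_of_reachableIn hxy.symm hda.symm
      ((mem_componentIn.1 hx).symm.trans (mem_componentIn.1 hd)) haD
  · refine ⟨d₀, (hDS.trans (erase_subset a S)).trans h.subset, hd₀, hD,
      fun x hx y hy hxy => ?_⟩
    obtain rfl := hout x hx y hy hxy
    exact absurd ⟨x, hx, hxy⟩ hadj

lemma exists_light_erase (hG : G.IsAcyclic) (h : G.IsHeavyPendant p A S a) :
    ∃ S a, G.IsHeavyPendant p A S a ∧
      ∀ v, ∑ x ∈ G.componentIn ↑(S.erase a) v, G.degree x ≤ p := by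
  induction hS : #S using Nat.strong_induction_on generalizing S a with
  | _ n ih =>
  by_cases hlight : ∀ v, ∑ x ∈ G.componentIn ↑(S.erase a) v, G.degree x ≤ p
  · exact ⟨S, a, h, hlight⟩
  push Not at hlight
  obtain ⟨v, hv⟩ := hlight
  obtain ⟨d, hd⟩ := h.componentIn_erase hG hv
  refine ih _ ?_ hd rfl
  rw [← hS]
  exact (card_le_card fun x hx => componentIn_subset hx).trans_lt (card_erase_lt_of_mem h.mem)

end IsHeavyPendant

theorem exists_separator (hG : G.IsAcyclic) (p : ℕ) (A : Finset V) :
    ∃ U : Finset V, #U * p ≤ ∑ x ∈ A, G.degree x ∧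
      ∀ v, ∑ x ∈ G.componentIn ↑(A \ U) v, G.degree x ≤ p := by
  induction A using Finset.strongInduction with
  | H A ih =>
  by_cases hA : ∑ x ∈ A, G.degree x ≤ p
  · refine ⟨∅, by simp, fun v => le_trans (sum_le_sum_of_subset fun x hx => ?_) hA⟩
    simpa using componentIn_subset hx
  push Not at hA
  obtain ⟨a₀, ha₀⟩ : A.Nonempty := nonempty_of_sum_ne_zero (p.zero_le.trans_lt hA).ne'
  obtain ⟨S, a, hS, hlight⟩ := (IsHeavyPendant.self hA ha₀).exists_light_erase hG
  obtain ⟨U, hUcard, hU⟩ := ih (A \ S) (sdiff_ssubset hS.subset ⟨a, hS.mem⟩)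
  refine ⟨insert a U, ?_, fun v => ?_⟩
  · calc #(insert a U) * p ≤ (#U + 1) * p := Nat.mul_le_mul_right _ (card_insert_le _ _)
      _ = #U * p + p := by ring
      _ ≤ ∑ x ∈ A \ S, G.degree x + ∑ x ∈ S, G.degree x := add_le_add hUcard hS.heavy.le
      _ = ∑ x ∈ A, G.degree x := sum_sdiff hS.subset
  have hBA : (↑(A \ insert a U) : Set V) ⊆ A := by simp
  have haB : a ∉ (↑(A \ insert a U) : Set V) := by simp
  by_cases hv : v ∈ S
  · refine le_trans (sum_le_sum_of_subset ((componentIn_subset_inter (S := ↑S) hv ?_).trans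
      (componentIn_mono ?_ v))) (hlight v)
    · exact fun x ⟨hx, hxS⟩ y ⟨hy, hyS⟩ => hS.not_adj hBA haB hx hy hxS hyS
    · intro x
      simp only [coe_sdiff, coe_insert, coe_erase, Set.mem_inter_iff, Set.mem_sdiff, mem_coe,
        Set.mem_insert_iff, Set.mem_singleton_iff]
      tauto
  · refine le_trans (sum_le_sum_of_subset ((componentIn_subset_inter (S := (↑S)ᶜ) hv ?_).trans
      (componentIn_mono ?_ v))) (hU v)
    · exact fun x ⟨hx, hxS⟩ y ⟨hy, hyS⟩ hxy =>
        hS.not_adj hBA haB hy hx (not_not.1 hyS) hxS hxy.symm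
    · intro x
      simp only [coe_sdiff, coe_insert, Set.mem_inter_iff, Set.mem_sdiff, mem_coe,
        Set.mem_insert_iff, Set.mem_compl_iff]
      tauto

end SimpleGraph

theorem stmt_4_general {V : Type*} [Fintype V] (G : SimpleGraph V)
    (hT : G.IsTree) (p : ℕ) :
    ∃ U : Finset V, U.card * p ≤ 2 * Fintype.card V ∧
      ∀ v : ((↑U : Set V)ᶜ : Set V),
        {e ∈ G.edgeSet | ∃ x : ((↑U : Set V)ᶜ : Set V),
          (G.induce ((↑U : Set V)ᶜ)).Reachable v x ∧ (x : V) ∈ e}.ncard ≤ p := by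
  classical
  obtain ⟨U, hcard, hlight⟩ := SimpleGraph.exists_separator hT.isAcyclic p univ
  refine ⟨U, ?_, fun v => ?_⟩
  · calc #U * p ≤ ∑ x, G.degree x := hcard
      _ = 2 * #G.edgeFinset := G.sum_degrees_eq_twice_card_edges
      _ ≤ 2 * Fintype.card V := by have := hT.card_edgeFinset; omega
  · refine (Set.ncard_le_ncard ?_ (Set.toFinite _)).trans
      ((G.ncard_incident_le_sum_degree _).trans (hlight v))
    rintro e ⟨he, x, hvx, hxe⟩
    have hx := (SimpleGraph.reachableIn_of_induce hvx).mono (B := ↑(univ \ U)) (by simp [Set.compl_eq_univ_sdiff])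
    exact ⟨he, x, SimpleGraph.mem_componentIn.2 hx, hxe⟩

theorem stmt_4 {V : Type*} [Fintype V] [DecidableEq V] (G : SimpleGraph V)
    (hT : G.IsTree) (p : ℕ) (hp : 0 < p) :
    ∃ U : Finset V, U.card * p ≤ 2 * Fintype.card V ∧
      ∀ v : ((↑U : Set V)ᶜ : Set V),
        {e ∈ G.edgeSet | ∃ x : ((↑U : Set V)ᶜ : Set V),
          (G.induce ((↑U : Set V)ᶜ)).Reachable v x ∧ (x : V) ∈ e}.ncard ≤ p :=
  stmt_4_general G hT p
end

section
/- Let w : Fin k → ℕ be a weight vector with all weights positive. If exactly two indices a and b are relevant for w, then w_a = w_b. -/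
/-- `b` is a majority color for the coloring `c` of balls with weights `w`. -/
def MajColor {k : ℕ} (w : Fin k → ℕ) (c : Fin k → Bool) (b : Bool) : Prop :=
  (∑ i, w i) < 2 * ∑ i ∈ Finset.univ.filter (fun i => c i = b), w i

/-- Index `i` is relevant: some coloring of the other balls is such that the two
choices of color for `i` lead to different outcomes of the majority problem. -/
def Relevant {k : ℕ} (w : Fin k → ℕ) (i : Fin k) : Prop :=
  ∃ c : Fin k → Bool, ¬ ∀ b : Bool,
    (MajColor w (Function.update c i true) b ↔ MajColor w (Function.update c i false) b)

lemma key_irrel {k : ℕ} (w : Fin k → ℕ) (c : Fin k) (hc : ¬ Relevant w c)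
    (B : Finset (Fin k)) (hcB : c ∉ B) (hB : 2 * ∑ i ∈ B, w i ≤ ∑ i, w i) :
    2 * (∑ i ∈ B, w i + w c) ≤ ∑ i, w i := by
  by_contra h
  push_neg at h
  apply hc
  refine ⟨fun i => decide (i ∈ B), ?_⟩
  intro hall
  have h1 := hall true
  have e1 : Finset.univ.filter
      (fun i => Function.update (fun i => decide (i ∈ B)) c true i = true) = insert c B := by
    ext j
    by_cases hj : j = c
    · subst hj; simp [Function.update_self]
    · simp [Function.update_of_ne hj, hj]
  have e2 : Finset.univ.filter
      (fun i => Function.update (fun i => decide (i ∈ B)) c false i = true) = B := by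
    ext j
    by_cases hj : j = c
    · subst hj; simp [Function.update_self, hcB]
    · simp [Function.update_of_ne hj]
  rw [MajColor, MajColor, e1, e2, Finset.sum_insert hcB] at h1
  omega

lemma extract {k : ℕ} (w : Fin k → ℕ) (i : Fin k) (h : Relevant w i) :
    ∃ A : Finset (Fin k), i ∉ A ∧ 2 * ∑ j ∈ A, w j ≤ ∑ j, w j ∧
      ∑ j, w j ≤ 2 * ∑ j ∈ A, w j + 2 * w i := by
  obtain ⟨χ, hχ⟩ := h
  push_neg at hχ
  obtain ⟨β, hβ⟩ := hχ
  set A := (Finset.univ.erase i).filter (fun j => χ j = β) with hA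
  have hiA : i ∉ A := fun hi => (Finset.notMem_erase i _) (Finset.mem_filter.mp hi).1
  have key : ∀ γ : Bool, Finset.univ.filter (fun j => Function.update χ i γ j = β)
      = if γ = β then insert i A else A := by
    intro γ
    ext j
    by_cases hj : j = i
    · subst hj
      by_cases hγ : γ = β <;> simp [Function.update_self, hγ, hA]
    · by_cases hγ : γ = β <;>
        simp [Function.update_of_ne hj, hγ, hA, hj]
  refine ⟨A, hiA, ?_⟩
  rw [MajColor, MajColor, key true, key false] at hβ
  cases β
  · rw [if_neg (by decide), if_pos rfl, Finset.sum_insert hiA] at hβ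
    omega
  · rw [if_pos rfl, if_neg (by decide), Finset.sum_insert hiA] at hβ
    omega

lemma avoid {k : ℕ} (w : Fin k → ℕ) (i j : Fin k) (h : Relevant w i) :
    ∃ A : Finset (Fin k), i ∉ A ∧ j ∉ A ∧ 2 * ∑ x ∈ A, w x ≤ ∑ x, w x ∧
      ∑ x, w x ≤ 2 * ∑ x ∈ A, w x + 2 * w i := by
  obtain ⟨A, hiA, h1, h2⟩ := extract w i h
  by_cases hj : j ∈ A
  · refine ⟨(Finset.univ.erase i) \ A, fun hm => (Finset.notMem_erase i _) (Finset.mem_sdiff.mp hm).1,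
      fun hm => (Finset.mem_sdiff.mp hm).2 hj, ?_, ?_⟩ <;>
    · have hsub : A ⊆ Finset.univ.erase i := fun x hx => Finset.mem_erase.mpr
        ⟨fun he => hiA (he ▸ hx), Finset.mem_univ x⟩
      have hsd := Finset.sum_sdiff (f := w) hsub
      have her := Finset.sum_erase_add Finset.univ w (Finset.mem_univ i)
      omega
  · exact ⟨A, hiA, hj, h1, h2⟩

lemma myClosure {k : ℕ} (w : Fin k → ℕ) (A : Finset (Fin k)) (hA : ∀ c ∈ A, ¬ Relevant w c) :
    ∀ B : Finset (Fin k), Disjoint A B → 2 * ∑ i ∈ B, w i ≤ ∑ i, w i →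
      2 * ∑ i ∈ A ∪ B, w i ≤ ∑ i, w i := by
  induction A using Finset.induction_on with
  | empty => intro B _ hB; simpa using hB
  | @insert a A haA ih =>
    intro B hdisj hB
    have hd2 : Disjoint A B := (Finset.disjoint_insert_left.mp hdisj).2
    have haB : a ∉ B := (Finset.disjoint_insert_left.mp hdisj).1
    have haU : a ∉ A ∪ B := by simp [haA, haB]
    have ihres := ih (fun c hc => hA c (Finset.mem_insert_of_mem hc)) B hd2 hB
    have := key_irrel w a (hA a (Finset.mem_insert_self a A)) (A ∪ B) haU ihres
    rw [Finset.insert_union, Finset.sum_insert haU]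
    omega

theorem stmt_6 {k : ℕ} (w : Fin k → ℕ) (hw : ∀ i, 0 < w i) (a b : Fin k) (hab : a ≠ b)
    (ha : Relevant w a) (hb : Relevant w b)
    (honly : ∀ i, Relevant w i → i = a ∨ i = b) :
    w a = w b := by
  set W := ∑ i, w i with hW
  have hirrel : ∀ c ∈ (Finset.univ.erase a).erase b, ¬ Relevant w c := by
    intro c hc hr
    rcases honly c hr with h | h
    · exact (Finset.mem_erase.mp (Finset.mem_erase.mp hc).2).1 h
    · exact (Finset.mem_erase.mp hc).1 h
  have hI : ∑ x ∈ (Finset.univ.erase a).erase b, w x + w b + w a = W := by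
    have h1 := Finset.sum_erase_add (Finset.univ.erase a) w
      (Finset.mem_erase.mpr ⟨Ne.symm hab, Finset.mem_univ b⟩)
    have h2 := Finset.sum_erase_add Finset.univ w (Finset.mem_univ a)
    omega
  -- step 2: 2 * w b ≤ W and 2 * w a ≤ W
  have step2 : ∀ i j : Fin k, i ≠ j → Relevant w i →
      W ≤ 2 * ∑ x ∈ (Finset.univ.erase i).erase j, w x + 2 * w i := by
    intro i j hij hri
    obtain ⟨A, hiA, hjA, _, h2⟩ := avoid w i j hri
    have hsub : A ⊆ (Finset.univ.erase i).erase j := fun x hx =>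
      Finset.mem_erase.mpr ⟨fun he => hjA (he ▸ hx),
        Finset.mem_erase.mpr ⟨fun he => hiA (he ▸ hx), Finset.mem_univ x⟩⟩
    have := Finset.sum_le_sum_of_subset (f := w) hsub
    omega
  have hIab : ∑ x ∈ (Finset.univ.erase b).erase a, w x + w a + w b = W := by
    have h1 := Finset.sum_erase_add (Finset.univ.erase b) w
      (Finset.mem_erase.mpr ⟨hab, Finset.mem_univ a⟩)
    have h2 := Finset.sum_erase_add Finset.univ w (Finset.mem_univ b)
    omega
  have hwb : 2 * w b ≤ W := by have := step2 a b hab ha; omega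
  have hwa : 2 * w a ≤ W := by have := step2 b a (Ne.symm hab) hb; omega
  -- step 3: closure gives W <= 2 * w i
  have step3 : ∀ i j : Fin k,
      (∀ c ∈ (Finset.univ.erase i).erase j, ¬ Relevant w c) →
      (∑ x ∈ (Finset.univ.erase i).erase j, w x + w j + w i = W) →
      2 * w j ≤ W → W ≤ 2 * w i := by
    intro i j hirr hsum hwj
    set A := (Finset.univ.erase i).erase j with hAdef
    have hjA : j ∉ A := Finset.notMem_erase j _
    have hd : Disjoint A {j} := Finset.disjoint_singleton_right.mpr hjA
    have hB : 2 * ∑ x ∈ ({j} : Finset (Fin k)), w x ≤ W := by simpa using hwj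
    have hcl := myClosure w A hirr {j} hd hB
    have hun : A ∪ {j} = insert j A := by
      rw [Finset.union_comm, ← Finset.insert_eq]
    rw [hun, Finset.sum_insert hjA] at hcl
    omega
  have hirrel' : ∀ c ∈ (Finset.univ.erase b).erase a, ¬ Relevant w c := by
    intro c hc hr
    rcases honly c hr with h | h
    · exact (Finset.mem_erase.mp hc).1 h
    · exact (Finset.mem_erase.mp (Finset.mem_erase.mp hc).2).1 h
  have h1 := step3 a b hirrel hI hwb
  have h2 := step3 b a hirrel' hIab hwa
  omega
end

section
/- Let w : Fin k → ℕ be a weight vector. If index i is relevant for w and j is an index with w_j ≥ w_i, then j is also relevant for w. Consequently there is a threshold t ≥ 0 such that an index is relevant if and only if its weight exceeds t. -/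
def Tb {k : ℕ} (w : Fin k → ℕ) (b : Bool) (c : Fin k → Bool) : ℕ :=
  ∑ l ∈ Finset.univ.filter (fun l => c l = b), w l

lemma tb_update {k : ℕ} (w : Fin k → ℕ) (b : Bool) (c : Fin k → Bool) (i : Fin k) :
    Tb w b (Function.update c i b) = w i + Tb w b (Function.update c i (!b)) := by
  unfold Tb
  have hset : Finset.univ.filter (fun l => Function.update c i b l = b)
      = insert i (Finset.univ.filter (fun l => Function.update c i (!b) l = b)) := by
    ext l
    rcases eq_or_ne l i with rfl | h
    · simp
    · simp [Function.update_of_ne h, h]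
  rw [hset, Finset.sum_insert]
  simp

lemma tb_add {k : ℕ} (w : Fin k → ℕ) (c : Fin k → Bool) :
    Tb w true c + Tb w false c = ∑ l, w l := by
  unfold Tb
  have hset : Finset.univ.filter (fun l => c l = false)
      = Finset.univ.filter (fun l => ¬ c l = true) := by
    ext l; simp
  rw [hset, Finset.sum_filter_add_sum_filter_not]

lemma relevant_iff {k : ℕ} (w : Fin k → ℕ) (i : Fin k) :
    Relevant w i ↔ 0 < w i ∧ ∃ c : Fin k → Bool,
      2 * Tb w true (Function.update c i false) ≤ ∑ l, w l ∧
      2 * Tb w false (Function.update c i true) ≤ ∑ l, w l := by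
  constructor
  · rintro ⟨c, hc⟩
    have hA : Tb w true (Function.update c i true)
        = w i + Tb w true (Function.update c i false) := by
      simpa using tb_update w true c i
    have hB : Tb w false (Function.update c i false)
        = w i + Tb w false (Function.update c i true) := by
      simpa using tb_update w false c i
    have hS : Tb w true (Function.update c i true) + Tb w false (Function.update c i true)
        = ∑ l, w l := tb_add w _
    have hc' : ¬ ∀ b : Bool,
        ((∑ l, w l) < 2 * Tb w b (Function.update c i true) ↔
          (∑ l, w l) < 2 * Tb w b (Function.update c i false)) := hc
    rw [Bool.forall_bool] at hc'
    exact ⟨by omega, c, by omega, by omega⟩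
  · rintro ⟨hw, c, h1, h2⟩
    have hA : Tb w true (Function.update c i true)
        = w i + Tb w true (Function.update c i false) := by
      simpa using tb_update w true c i
    have hB : Tb w false (Function.update c i false)
        = w i + Tb w false (Function.update c i true) := by
      simpa using tb_update w false c i
    have hS : Tb w true (Function.update c i true) + Tb w false (Function.update c i true)
        = ∑ l, w l := tb_add w _
    refine ⟨c, fun h => ?_⟩
    have ht : (∑ l, w l) < 2 * Tb w true (Function.update c i true) ↔
        (∑ l, w l) < 2 * Tb w true (Function.update c i false) := h true
    have hf : (∑ l, w l) < 2 * Tb w false (Function.update c i true) ↔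
        (∑ l, w l) < 2 * Tb w false (Function.update c i false) := h false
    omega

lemma update_eq_self' {α β : Type*} [DecidableEq α] (f : α → β) {a : α} {b : β}
    (h : f a = b) : Function.update f a b = f := by
  rw [← h]; exact Function.update_eq_self _ _

lemma relevant_mono {k : ℕ} (w : Fin k → ℕ) {i j : Fin k}
    (hi : Relevant w i) (hle : w i ≤ w j) : Relevant w j := by
  rcases eq_or_ne i j with rfl | hij
  · exact hi
  rw [relevant_iff] at hi ⊢
  obtain ⟨hwi, c, h1, h2⟩ := hi
  refine ⟨lt_of_lt_of_le hwi hle, Function.update c i (c j), ?_⟩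
  have hcj : (Function.update c i (c j)) j = c j := Function.update_of_ne (Ne.symm hij) _ _
  cases hb : c j
  · -- c j = false
    rw [hb] at hcj
    constructor
    · have : Function.update (Function.update c i false) j false
          = Function.update c i false := by
        exact update_eq_self' _ hcj
      rw [this]; exact h1
    · -- Tb false (update (update c i false) j true)
      set e := Function.update c i false with he
      have e1 : Tb w false (Function.update e j false)
          = w j + Tb w false (Function.update e j true) := by
        simpa using tb_update w false e j
      have e2 : Function.update e j false = e := by
        exact update_eq_self' _ hcj
      have e3 : Tb w false e = w i + Tb w false (Function.update c i true) := by
        simpa using tb_update w false c i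
      rw [e2] at e1
      omega
  · -- c j = true : c' = update c i true
    rw [hb] at hcj
    constructor
    · set d := Function.update c i true with hd
      have e1 : Tb w true (Function.update d j true)
          = w j + Tb w true (Function.update d j false) := by
        simpa using tb_update w true d j
      have e2 : Function.update d j true = d := by
        exact update_eq_self' _ hcj
      have e3 : Tb w true d = w i + Tb w true (Function.update c i false) := by
        simpa using tb_update w true c i
      rw [e2] at e1
      omega
    · have : Function.update (Function.update c i true) j true
          = Function.update c i true := by
        exact update_eq_self' _ hcj
      rw [this]; exact h2

theorem stmt_7 {k : ℕ} (w : Fin k → ℕ) :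
    (∀ i j : Fin k, Relevant w i → w i ≤ w j → Relevant w j) ∧
    ∃ t : ℕ, ∀ i : Fin k, Relevant w i ↔ t < w i := by
  classical
  have mono : ∀ i j : Fin k, Relevant w i → w i ≤ w j → Relevant w j :=
    fun i j hi h => relevant_mono w hi h
  refine ⟨mono, ?_⟩
  by_cases h : ∃ i : Fin k, Relevant w i
  · obtain ⟨i0, hi0⟩ := h
    obtain ⟨m, hm, hmin⟩ := Finset.exists_min_image
      (Finset.univ.filter (fun i => Relevant w i)) w ⟨i0, by simp [hi0]⟩
    have hmrel : Relevant w m := by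
      simpa using (Finset.mem_filter.1 hm).2
    have hmpos : 0 < w m := ((relevant_iff w m).1 hmrel).1
    refine ⟨w m - 1, fun i => ⟨fun hi => ?_, fun hi => ?_⟩⟩
    · have := hmin i (by simp [hi])
      omega
    · exact mono m i hmrel (by omega)
  · push_neg at h
    refine ⟨∑ l, w l, fun i => ⟨fun hi => absurd hi (h i), fun hi => ?_⟩⟩
    have hle : w i ≤ ∑ l, w l :=
      Finset.single_le_sum (fun _ _ => Nat.zero_le _) (Finset.mem_univ i)
    omega
end

section
/- Let w : Fin k → ℕ and suppose a, b, c are exactly the relevant indices with weights a ≥ b (abusing notation, writing a for w_a etc.), and let m be the sum of the weights of all other indices with m > 0. Then a + m < b + c. In particular, c > a − b + m, so if a and b receive different colors, the index c is a majority ball. -/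
lemma flip_eq {k : ℕ} (w : Fin k → ℕ) (d : Fin k) (hd : ¬ Relevant w d)
    (g : Fin k → Bool) (x : Bool) (β : Bool) :
    MajColor w g β ↔ MajColor w (Function.update g d x) β := by
  simp only [Relevant, not_exists, not_not] at hd
  have h := hd g β
  have hg : Function.update g d (g d) = g := Function.update_eq_self d g
  cases hx : x <;> cases hgd : g d <;> rw [hgd] at hg <;>
    simp only [hg] at h ⊢ <;> tauto

lemma agree {k : ℕ} (w : Fin k → ℕ) (s : Finset (Fin k)) :
    ∀ g h : Fin k → Bool,
      (∀ i ∈ s, ¬ Relevant w i) → (∀ i, g i ≠ h i → i ∈ s) →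
      ∀ β, MajColor w g β ↔ MajColor w h β := by
  induction s using Finset.induction_on with
  | empty =>
    intro g h _ hdiff β
    have : g = h := funext fun i => by_contra fun hne => by
      simpa using hdiff i hne
    rw [this]
  | @insert d t hdt ih =>
    intro g h hirr hdiff β
    have h1 : MajColor w g β ↔ MajColor w (Function.update g d (h d)) β :=
      flip_eq w d (hirr d (Finset.mem_insert_self d t)) g (h d) β
    have h2 := ih (Function.update g d (h d)) h
      (fun i hi => hirr i (Finset.mem_insert_of_mem hi))
      (fun i hne => by
        by_cases hid : i = d
        · subst hid; simp at hne
        · rw [Function.update_of_ne hid] at hne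
          rcases Finset.mem_insert.mp (hdiff i hne) with h | h
          · exact absurd h hid
          · exact h) β
    exact h1.trans h2

theorem stmt_9 {k : ℕ} (w : Fin k → ℕ) (a b c : Fin k)
    (hab : a ≠ b) (hac : a ≠ c) (hbc : b ≠ c)
    (ha : Relevant w a) (hb : Relevant w b) (hc : Relevant w c)
    (honly : ∀ i, Relevant w i → i = a ∨ i = b ∨ i = c)
    (hba : w b ≤ w a)
    (m : ℕ) (hm : m = ∑ i ∈ Finset.univ.filter (fun i => i ≠ a ∧ i ≠ b ∧ i ≠ c), w i)
    (hmpos : 0 < m)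
    (hnotdone : w a ≤ w b + w c + m) :
    w a + m < w b + w c ∧ w a - w b + m < w c := by
  classical
  set X : Fin k → Bool := fun i => decide (i = a) with hX
  set Y : Fin k → Bool := fun i => decide (i ≠ b ∧ i ≠ c) with hY
  set s : Finset (Fin k) := Finset.univ.filter (fun i => i ≠ a ∧ i ≠ b ∧ i ≠ c) with hs
  -- all balls off a,b,c are irrelevant
  have hirr : ∀ i ∈ s, ¬ Relevant w i := by
    intro i hi hrel
    simp only [hs, Finset.mem_filter] at hi
    rcases honly i hrel with h | h | h <;> tauto
  have hdiff : ∀ i, X i ≠ Y i → i ∈ s := by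
    intro i hne
    simp only [hs, Finset.mem_filter, Finset.mem_univ, true_and]
    by_contra hcon
    push_neg at hcon
    by_cases hia : i = a
    · subst hia
      simp [hX, hY, hab, hac] at hne
    · by_cases hib : i = b
      · subst hib; simp [hX, hY, hab.symm] at hne
      · have hic : i = c := hcon hia hib
        subst hic; simp [hX, hY, hac.symm, hbc.symm] at hne
  have hE := agree w s X Y hirr hdiff
  -- total sum
  have hT : (∑ i, w i) = w a + w b + w c + m := by
    have hsplit := Finset.sum_filter_add_sum_filter_not Finset.univ
      (fun i => i ≠ a ∧ i ≠ b ∧ i ≠ c) w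
    have hcompl : Finset.univ.filter (fun i => ¬(i ≠ a ∧ i ≠ b ∧ i ≠ c))
        = {a, b, c} := by
      ext i
      simp [Finset.mem_insert]
      tauto
    have habc : ∑ i ∈ ({a, b, c} : Finset (Fin k)), w i = w a + w b + w c := by
      rw [Finset.sum_insert (by simp [hab, hac]),
        Finset.sum_insert (by simp [hbc]), Finset.sum_singleton, add_assoc]
    rw [hcompl, habc, ← hs] at hsplit
    omega
  -- sums of true classes
  have hXt : ∑ i ∈ Finset.univ.filter (fun i => X i = true), w i = w a := by
    have : Finset.univ.filter (fun i => X i = true) = {a} := by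
      ext i; simp [hX]
    rw [this, Finset.sum_singleton]
  have hYt : ∑ i ∈ Finset.univ.filter (fun i => Y i = true), w i = w a + m := by
    have hf : Finset.univ.filter (fun i => Y i = true) = insert a s := by
      ext i
      simp only [hY, Finset.mem_filter, Finset.mem_univ, true_and,
        Finset.mem_insert, hs, decide_eq_true_eq]
      constructor
      · rintro ⟨h1, h2⟩
        by_cases hia : i = a
        · left; exact hia
        · right; exact ⟨hia, h1, h2⟩
      · rintro (rfl | ⟨_, h1, h2⟩) <;> tauto
    have hna : a ∉ s := by simp [hs]
    rw [hf, Finset.sum_insert hna, ← hm]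
  -- complements
  have hcompX : ∑ i ∈ Finset.univ.filter (fun i => X i = true), w i
      + ∑ i ∈ Finset.univ.filter (fun i => X i = false), w i = ∑ i, w i := by
    have := Finset.sum_filter_add_sum_filter_not Finset.univ (fun i => X i = true) w
    simpa using this
  have hcompY : ∑ i ∈ Finset.univ.filter (fun i => Y i = true), w i
      + ∑ i ∈ Finset.univ.filter (fun i => Y i = false), w i = ∑ i, w i := by
    have := Finset.sum_filter_add_sum_filter_not Finset.univ (fun i => Y i = true) w
    simpa using this
  have hEt := hE true
  have hEf := hE false
  simp only [MajColor] at hEt hEf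
  omega
end

section
/- Let k > 2^n + 1 and w : Fin k → ℕ with w_1 = w_2 = ⋯ = w_{2^n} (common value v > 0). Suppose the number of partitions of {2^n+1, …, k} into sets B and R with (∑_{i∈B} w_i) − (∑_{i∈R} w_i) = v·2^n is odd. Then the total number of balanced 2-colorings of all k indices (colorings where both color classes have equal total weight) is congruent to 2 mod 4. -/
/-! Splitting a colouring into its restriction to the uniform block `{i | i < 2 ^ n}` and to the
tail, the number of balanced colourings is `∑ j, C(2^n, j) * M j`, where `M j` counts the
partitions of the tail of imbalance `v * (2^n - 2j)`. Complementing the blue class turns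
imbalance `d` into `-d`, so `M (2^n) = M 0`, which is odd, and pairs off the partitions of
imbalance `0`, so `M (2^(n-1))` is even. By Kummer's theorem `4 ∣ C(2^n, j)` for all
other `0 < j < 2^n`, and `2 ∣ C(2^n, 2^(n-1))`; hence the sum is `2 * M 0 ≡ 2 (mod 4)`. -/

open Finset

section Imbalance

variable {α G : Type*} [DecidableEq α] [AddCommGroup G]

def imbalance (w : α → G) (s B : Finset α) : G := ∑ i ∈ B, w i - ∑ i ∈ s \ B, w i

def numWithImbalance [DecidableEq G] (w : α → G) (s : Finset α) (d : G) : ℕ :=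
  #{B ∈ s.powerset | imbalance w s B = d}

theorem imbalance_sdiff {w : α → G} {s B : Finset α} (hB : B ⊆ s) :
    imbalance w s (s \ B) = -imbalance w s B := by
  rw [imbalance, imbalance, Finset.sdiff_sdiff_eq_self hB, neg_sub]

theorem imbalance_union {w : α → G} {s t A B : Finset α} (hst : Disjoint s t) (hA : A ⊆ s)
    (hB : B ⊆ t) : imbalance w (s ∪ t) (A ∪ B) = imbalance w s A + imbalance w t B := by
  have hcompl : (s ∪ t) \ (A ∪ B) = (s \ A) ∪ (t \ B) := by
    ext i
    have := disjoint_left.mp hst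
    have := @hA i
    have := @hB i
    simp only [mem_sdiff, mem_union]
    tauto
  rw [imbalance, imbalance, imbalance, hcompl, sum_union (hst.mono hA hB),
    sum_union (hst.mono sdiff_subset sdiff_subset)]
  abel

theorem imbalance_of_eq_const {w : α → G} {s A : Finset α} {v : G} (hw : ∀ i ∈ s, w i = v)
    (hA : A ⊆ s) : imbalance w s A = (2 * #A - #s : ℤ) • v := by
  rw [imbalance, sum_congr rfl fun i hi => hw i (hA hi),
    sum_congr rfl fun i hi => hw i (sdiff_subset hi), sum_const, sum_const, card_sdiff_of_subset hA,
    ← natCast_zsmul, ← natCast_zsmul, Nat.cast_sub (card_le_card hA), ← sub_smul]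
  congr 1
  ring

theorem sum_powerset_union {β : Type*} [AddCommMonoid β] {s t : Finset α} (hst : Disjoint s t)
    (f : Finset α → β) :
    ∑ S ∈ (s ∪ t).powerset, f S = ∑ A ∈ s.powerset, ∑ B ∈ t.powerset, f (A ∪ B) := by
  have hsplit : ∀ S ⊆ s ∪ t, S ∩ s ∪ S ∩ t = S := fun S hS => by
    rw [← inter_union_distrib_left, inter_eq_left.mpr hS]
  rw [← sum_product' s.powerset t.powerset fun A B => f (A ∪ B)]
  refine sum_nbij' (fun S => (S ∩ s, S ∩ t)) (fun p => p.1 ∪ p.2) ?_ ?_ ?_ ?_ ?_ <;>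
    simp only [mem_product, mem_powerset]
  · exact fun S _ => ⟨inter_subset_right, inter_subset_right⟩
  · exact fun p hp => union_subset_union hp.1 hp.2
  · exact hsplit
  · rintro ⟨A, B⟩ ⟨hA, hB⟩
    dsimp only at hA hB ⊢
    rw [union_inter_distrib_right, union_inter_distrib_right, inter_eq_left.mpr hA,
      inter_eq_left.mpr hB, disjoint_iff_inter_eq_empty.mp (hst.mono_left hA),
      disjoint_iff_inter_eq_empty.mp (hst.symm.mono_left hB), union_empty, empty_union]
  · exact fun S hS => by rw [hsplit S hS]

variable [DecidableEq G]

theorem numWithImbalance_neg (w : α → G) (s : Finset α) (d : G) :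
    numWithImbalance w s (-d) = numWithImbalance w s d := by
  refine card_nbij' (s \ ·) (s \ ·) ?_ ?_ ?_ ?_ <;>
    simp only [coe_filter, mem_powerset, Set.MapsTo, Set.LeftInvOn, Set.mem_ofPred_eq]
  · rintro B ⟨hB, hd⟩
    exact ⟨sdiff_subset, by rw [imbalance_sdiff hB, hd, neg_neg]⟩
  · rintro B ⟨hB, hd⟩
    exact ⟨sdiff_subset, by rw [imbalance_sdiff hB, hd]⟩
  · exact fun B hB => Finset.sdiff_sdiff_eq_self hB.1
  · exact fun B hB => Finset.sdiff_sdiff_eq_self hB.1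

theorem numWithImbalance_union (w : α → G) {s t : Finset α} (hst : Disjoint s t) (d : G) :
    numWithImbalance w (s ∪ t) d =
      ∑ A ∈ s.powerset, numWithImbalance w t (d - imbalance w s A) := by
  simp only [numWithImbalance, card_filter]
  rw [sum_powerset_union hst]
  refine sum_congr rfl fun A hA => sum_congr rfl fun B hB => ?_
  simp only [imbalance_union hst (mem_powerset.mp hA) (mem_powerset.mp hB), eq_sub_iff_add_eq']

theorem even_numWithImbalance_zero (w : α → G) {s : Finset α} (hs : s.Nonempty) :
    Even (numWithImbalance w s 0) := by
  obtain ⟨x, hx⟩ := hs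
  have hdisj : Disjoint {x} (s.erase x) := disjoint_singleton_left.mpr (notMem_erase x s)
  have hpow : ({x} : Finset α).powerset = {∅, {x}} := by ext; simp [subset_singleton_iff]
  rw [← insert_erase hx, insert_eq, numWithImbalance_union w hdisj, hpow,
    sum_pair (singleton_ne_empty x).symm]
  simp [imbalance, numWithImbalance_neg]

theorem card_balanced_eq_numWithImbalance_zero [Fintype α] (w : α → G) :
    #{c : α → Bool | ∑ i with c i = true, w i = ∑ i with c i = false, w i} =
      numWithImbalance w univ 0 := by
  have hfalse : ∀ c : α → Bool,
      ({i | c i = false} : Finset α) = univ \ ({i | c i = true} : Finset α) :=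
    fun c => by ext i; simp
  refine card_nbij' (fun c => ({i | c i = true} : Finset α)) (fun S i => decide (i ∈ S))
    ?_ ?_ ?_ ?_ <;>
    simp only [coe_filter, mem_univ, true_and, mem_powerset, subset_univ, Set.MapsTo,
      Set.LeftInvOn, Set.mem_ofPred_eq, imbalance, sub_eq_zero]
  · exact fun c hc => by rwa [← hfalse]
  · intro S hS
    convert hS using 2 <;> ext i <;> simp
  · exact fun c _ => funext fun i => by simp
  · exact fun S _ => by ext i; simp

end Imbalance

namespace Nat

theorem four_dvd_choose_two_pow {n j : ℕ} (hj0 : j ≠ 0) (hjn : j < 2 ^ n) (hj : 2 * j ≠ 2 ^ n) :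
    4 ∣ (2 ^ n).choose j := by
  have hval : j.factorization 2 + 2 ≤ n := by
    by_contra! h
    obtain ⟨c, hc⟩ : 2 ^ n ∣ 2 * j :=
      (pow_dvd_pow 2 (by omega : n ≤ j.factorization 2 + 1)).trans
        (by rw [pow_succ']; exact mul_dvd_mul_left 2 (ordProj_dvd j 2))
    have hc2 : c < 2 := by
      by_contra! hc2
      have := Nat.mul_le_mul_left (2 ^ n) hc2
      omega
    interval_cases c <;> omega
  have hC : (2 ^ n).choose j ≠ 0 := (choose_pos hjn.le).ne'
  rw [show 4 = 2 ^ 2 by rfl, prime_two.pow_dvd_iff_le_factorization hC,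
    factorization_choose_prime_pow prime_two hjn.le hj0]
  omega

theorem sum_choose_two_pow_mul_mod_four {n : ℕ} (M : ℕ → ℕ) (hsymm : M (2 ^ n) = M 0)
    (hodd : Odd (M 0)) (hmid : ∀ j, 2 * j = 2 ^ n → Even (M j)) :
    (∑ j ∈ range (2 ^ n + 1), (2 ^ n).choose j * M j) % 4 = 2 := by
  have hinterior : 4 ∣ ∑ j ∈ Ico 1 (2 ^ n), (2 ^ n).choose j * M j := by
    refine dvd_sum fun j hj => ?_
    obtain ⟨hj0, hjn⟩ := mem_Ico.mp hj
    by_cases hjmid : 2 * j = 2 ^ n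
    · -- the central binomial coefficient is only even, but then `M j` is even too
      exact mul_dvd_mul (prime_two.dvd_choose_pow (by omega) hjn.ne)
        (hmid j hjmid).two_dvd
    · exact (four_dvd_choose_two_pow (by omega) hjn hjmid).mul_right _
  rw [sum_range_succ, sum_range_eq_add_Ico _ (by positivity), choose_zero_right, choose_self,
    hsymm]
  obtain ⟨a, ha⟩ := hodd
  obtain ⟨q, hq⟩ := hinterior
  omega

end Nat

theorem stmt_11_general (n k : ℕ) (hk : 2 ^ n + 1 < k) (w : Fin k → ℕ) (v : ℕ)
    (hw : ∀ i : Fin k, (i : ℕ) < 2 ^ n → w i = v)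
    (tail : Finset (Fin k)) (htail : tail = Finset.univ.filter (fun i : Fin k => 2 ^ n ≤ (i : ℕ)))
    (hodd : Odd ((tail.powerset.filter (fun B : Finset (Fin k) =>
      (∑ i ∈ B, (w i : ℤ)) - ∑ i ∈ tail \ B, (w i : ℤ) = (v : ℤ) * 2 ^ n)).card)) :
    (Finset.univ.filter (fun c : Fin k → Bool =>
      ∑ i ∈ Finset.univ.filter (fun i => c i = true), w i =
      ∑ i ∈ Finset.univ.filter (fun i => c i = false), w i)).card % 4 = 2 := by
  set w' : Fin k → ℤ := fun i => w i
  set head : Finset (Fin k) := {i | (i : ℕ) < 2 ^ n}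
  have hunion : head ∪ tail = univ := by ext i; simp [head, htail, lt_or_ge]
  have hdisj : Disjoint head tail := by
    simp only [head, htail, disjoint_filter]; intro i _ hi; omega
  have hhead : #head = 2 ^ n := by simp only [head, Fin.card_filter_val_lt]; omega
  have hw' : ∀ i ∈ head, w' i = v := fun i hi => by simp [w', hw i (by simpa [head] using hi)]
  set M : ℕ → ℕ := fun j => numWithImbalance w' tail (((2 : ℤ) ^ n - 2 * j) • (v : ℤ))
  have hcount : #{c : Fin k → Bool | ∑ i with c i = true, w i = ∑ i with c i = false, w i} =
      ∑ j ∈ range (2 ^ n + 1), (2 ^ n).choose j * M j := by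
    calc _ = numWithImbalance w' univ 0 := by
          rw [← card_balanced_eq_numWithImbalance_zero]
          simp only [w', ← Nat.cast_sum, Nat.cast_inj]
      _ = ∑ A ∈ head.powerset, M #A := by
          rw [← hunion, numWithImbalance_union w' hdisj]
          refine sum_congr rfl fun A hA => ?_
          rw [imbalance_of_eq_const hw' (mem_powerset.mp hA), hhead, zero_sub, ← neg_smul, neg_sub]
          push_cast; rfl
      _ = _ := by rw [sum_powerset_apply_card, hhead]; rfl
  rw [hcount]
  refine Nat.sum_choose_two_pow_mul_mod_four M ?_ ?_ ?_
  · simp only [M]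
    rw [← numWithImbalance_neg]
    congr 1; push_cast; ring_nf
  · convert hodd using 4
    simp [M, numWithImbalance, imbalance, w', mul_comm]
  · intro j hj
    have hzero : ((2 : ℤ) ^ n - 2 * j) • (v : ℤ) = 0 := by
      rw [show ((2 : ℤ) ^ n) = 2 * j by exact_mod_cast hj.symm, sub_self, zero_smul]
    simp only [M, hzero]
    exact even_numWithImbalance_zero w' ⟨⟨2 ^ n, by omega⟩, by simp [htail]⟩

theorem stmt_11 (n k : ℕ) (hk : 2 ^ n + 1 < k) (w : Fin k → ℕ) (v : ℕ) (hv : 0 < v)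
    (hw : ∀ i : Fin k, (i : ℕ) < 2 ^ n → w i = v)
    (tail : Finset (Fin k)) (htail : tail = Finset.univ.filter (fun i : Fin k => 2 ^ n ≤ (i : ℕ)))
    (hodd : Odd ((tail.powerset.filter (fun B : Finset (Fin k) =>
      (∑ i ∈ B, (w i : ℤ)) - ∑ i ∈ tail \ B, (w i : ℤ) = (v : ℤ) * 2 ^ n)).card)) :
    (Finset.univ.filter (fun c : Fin k → Bool =>
      ∑ i ∈ Finset.univ.filter (fun i => c i = true), w i =
      ∑ i ∈ Finset.univ.filter (fun i => c i = false), w i)).card % 4 = 2 :=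
  stmt_11_general n k hk w v hw tail htail hodd
end

section
/- Consider the path P on n = k² + 1 vertices x_1, …, x_n where k is even, colored so that vertex x_j is red iff ⌈j/k⌉ is odd (for j ≤ k²) and x_{k²+1} is blue. For any set S of at most n − 2k − 2 edges of P, consider the connected components of the graph (V, S). Then at most k − 1 components are balanced (equal numbers of red and blue vertices), every component has |#red − #blue| ≤ k + 1, and the sum over all unbalanced components except any single one of |#red − #blue| is at least k + 1. -/
/-!
Number the vertices `0, …, k²` and let `F t` be the number of red minus blue vertices among
`0, …, t - 1`. With stripes of length `k`, `F` zigzags between `0` and `k` on `[0, k²]`, ends at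
`F (k²) = 0` because `k` is even, and `F (k² + 1) = -1`. The components of `(V, S)` are intervals
of the path, so each has weight `|F (b + 1) - F a| ≤ k + 1`. A balanced component contains two
adjacent vertices of different colours, which happens only across the `k - 1` stripe boundaries,
so at most `k - 1` components are balanced. There are at least `n - |S| ≥ 2k + 1` components,
hence at least `k + 1` unbalanced ones avoid any given `C₀`, each of weight at least `1`.
-/

open Finset

namespace SimpleGraph

variable {α : Type*} [LinearOrder α] {G : SimpleGraph α}

theorem Reachable.exists_covBy_adj_of_le_hasse (hG : G ≤ hasse α) {x y z : α}
    (hxz : G.Reachable x z) (hxy : x < y) (hyz : y ≤ z) :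
    ∃ w, w ⋖ y ∧ G.Adj w y ∧ G.Reachable x w := by
  obtain ⟨p⟩ := hxz
  obtain ⟨d, hd, hlt, hge⟩ := p.exists_boundary_dart {v | v < y} hxy (not_lt.2 hyz)
  simp only [Set.mem_ofPred_eq, not_lt] at hlt hge
  have hcov : d.fst ⋖ d.snd :=
    (hasse_adj.1 (hG d.adj)).resolve_right fun h => (h.lt.trans hlt).not_ge hge
  obtain rfl : d.snd = y := le_antisymm (not_lt.1 fun h => hcov.2 hlt h) hge
  exact ⟨d.fst, hcov, d.adj, ⟨p.takeUntil _ (p.dart_fst_mem_support_of_mem_darts hd)⟩⟩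

theorem ConnectedComponent.ordConnected_supp_of_le_hasse (hG : G ≤ hasse α)
    (C : G.ConnectedComponent) : C.supp.OrdConnected := by
  refine ⟨fun x hx z hz y ⟨hxy, hyz⟩ => ?_⟩
  rcases hxy.lt_or_eq with hxy | rfl
  · rw [ConnectedComponent.mem_supp_iff] at hx hz ⊢
    have hxz : G.Reachable x z := ConnectedComponent.exact (hx.trans hz.symm)
    obtain ⟨w, -, hwy, hxw⟩ := hxz.exists_covBy_adj_of_le_hasse hG hxy hyz
    rw [← hx]
    exact (ConnectedComponent.sound (hxw.trans hwy.reachable)).symm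
  · exact hx

/-- A vertex with no adjacent lower cover is the least vertex of its component. -/
theorem ncard_le_card_connectedComponent_of_le_hasse [Finite α] (hG : G ≤ hasse α) :
    {y | ∀ w, w ⋖ y → ¬ G.Adj w y}.ncard ≤ Nat.card G.ConnectedComponent := by
  rw [← Set.ncard_univ]
  refine Set.ncard_le_ncard_of_injOn G.connectedComponentMk (fun _ _ => trivial) ?_
  have key : ∀ x y, x < y → G.connectedComponentMk x = G.connectedComponentMk y →
      ¬ ∀ w, w ⋖ y → ¬ G.Adj w y := fun x y hxy h hy => by
    obtain ⟨w, hw, hadj, -⟩ :=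
      (ConnectedComponent.exact h).exists_covBy_adj_of_le_hasse hG hxy le_rfl
    exact hy w hw hadj
  intro x hx y hy h
  rcases lt_trichotomy x y with hxy | rfl | hxy
  · exact absurd hy (key x y hxy h)
  · rfl
  · exact absurd hx (key y x hxy h.symm)

variable {V : Type*} {H : SimpleGraph V}

theorem ConnectedComponent.exists_adj_ne {β : Type*} (C : H.ConnectedComponent) (c : V → β)
    {u v : V} (hu : u ∈ C.supp) (hv : v ∈ C.supp) (huv : c u ≠ c v) :
    ∃ x ∈ C.supp, ∃ y, H.Adj x y ∧ c x ≠ c y := by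
  classical
  rw [ConnectedComponent.mem_supp_iff] at hu hv
  obtain ⟨p⟩ := ConnectedComponent.exact (hu.trans hv.symm)
  obtain ⟨d, hd, hfst, hsnd⟩ := p.exists_boundary_dart {x | c x = c u} rfl huv.symm
  refine ⟨d.fst, ?_, d.snd, d.adj, fun h => hsnd (h.symm.trans hfst)⟩
  rw [ConnectedComponent.mem_supp_iff, ← hu]
  exact (ConnectedComponent.sound ⟨p.takeUntil _ (p.dart_fst_mem_support_of_mem_darts hd)⟩).symm

theorem ConnectedComponent.ncard_le_ncard_of_forall_exists_mem_supp
    {B : Set H.ConnectedComponent} {T : Set V} (hT : T.Finite)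
    (h : ∀ C ∈ B, ∃ v ∈ T, v ∈ C.supp) : B.ncard ≤ T.ncard := by
  refine (Set.ncard_le_ncard (fun C hC => ?_) (hT.image H.connectedComponentMk)).trans
    (Set.ncard_image_le hT)
  obtain ⟨v, hvT, hvC⟩ := h C hC
  exact ⟨v, hvT, (C.mem_supp_iff v).1 hvC⟩

end SimpleGraph

namespace MajorityPath

noncomputable def imbalance {V : Type*} (c : V → Bool) (s : Set V) : ℤ :=
  ({x | x ∈ s ∧ c x = true}.ncard : ℤ) - ({x | x ∈ s ∧ c x = false}.ncard : ℤ)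

def signOf (b : Bool) : ℤ := if b then 1 else -1

theorem imbalance_coe_finset {V : Type*} (c : V → Bool) (s : Finset V) :
    imbalance c s = ∑ x ∈ s, signOf (c x) := by
  classical
  have hcard (b : Bool) : {x | x ∈ (s : Set V) ∧ c x = b}.ncard = #(s.filter (c · = b)) := by
    rw [← Set.ncard_coe_finset, coe_filter]; rfl
  simp only [imbalance, hcard, signOf, sum_ite, sum_const, nsmul_eq_mul, mul_one, mul_neg]
  simp [sub_eq_add_neg]

theorem imbalance_eq_zero_iff {V : Type*} {c : V → Bool} {s : Set V} :
    imbalance c s = 0 ↔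
      {x | x ∈ s ∧ c x = true}.ncard = {x | x ∈ s ∧ c x = false}.ncard := by
  rw [imbalance]
  omega

theorem exists_ne_of_imbalance_eq_zero {V : Type*} [Finite V] {c : V → Bool} {s : Set V}
    (hs : s.Nonempty) (h : imbalance c s = 0) : ∃ u ∈ s, ∃ v ∈ s, c u ≠ c v := by
  obtain ⟨v, hv⟩ := hs
  by_contra! hconst
  have hone : ∀ b, c v = b → 0 < {x | x ∈ s ∧ c x = b}.ncard := fun b hb =>
    (Set.ncard_pos (Set.toFinite _)).2 ⟨v, hv, hb⟩
  have hzero : ∀ b, c v ≠ b → {x | x ∈ s ∧ c x = b}.ncard = 0 := fun b hb =>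
    (Set.ncard_eq_zero (Set.toFinite _)).2 <|
      Set.eq_empty_of_forall_notMem fun x ⟨hx, hxb⟩ => hb (hxb ▸ hconst v hv x hx)
  unfold imbalance at h
  cases hcv : c v
  · have := hone false hcv; have := hzero true (by simp [hcv]); omega
  · have := hone true hcv; have := hzero false (by simp [hcv]); omega

theorem card_le_ncard_eq_zero_add_one_add_finsum {ι : Type*} [Finite ι] (w : ι → ℕ)
    (a : ι) :
    Nat.card ι ≤ {i | w i = 0}.ncard + 1 + ∑ᶠ i ∈ {i | i ≠ a}, w i := by
  classical
  cases nonempty_fintype ι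
  have hne : {i | i ≠ a} = ↑(univ.erase a) := by ext; simp
  have hzero : {i | w i = 0}.ncard = #(univ.filter (w · = 0)) := by
    rw [← Set.ncard_coe_finset, coe_filter]; simp
  have hsplit := card_filter_add_card_filter_not (s := univ) (w · = 0)
  have herase : #(univ.filter (¬ w · = 0)) - 1 ≤ #((univ.erase a).filter (¬ w · = 0)) := by
    rw [filter_erase]; exact pred_card_le_card_erase
  have hsum : #((univ.erase a).filter (¬ w · = 0)) ≤ ∑ i ∈ univ.erase a, w i :=
    calc #((univ.erase a).filter (¬ w · = 0))
        ≤ ∑ i ∈ (univ.erase a).filter (¬ w · = 0), w i := by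
          simpa using card_nsmul_le_sum _ w 1 fun i hi =>
            Nat.one_le_iff_ne_zero.2 (mem_filter.1 hi).2
      _ ≤ ∑ i ∈ univ.erase a, w i := sum_le_sum_of_subset (filter_subset _ _)
  rw [hne, finsum_mem_coe_finset, hzero, Nat.card_eq_fintype_card, ← card_univ]
  omega

open SimpleGraph

def pathSubgraph (n : ℕ) (S : Finset ℕ) : SimpleGraph (Fin n) :=
  fromRel fun a b : Fin n => (a : ℕ) ∈ S ∧ (b : ℕ) = a + 1

section Graph

variable {n : ℕ} {S : Finset ℕ}

theorem pathSubgraph_adj {a b : Fin n} :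
    (pathSubgraph n S).Adj a b ↔
      (a : ℕ) ∈ S ∧ (b : ℕ) = a + 1 ∨ (b : ℕ) ∈ S ∧ (a : ℕ) = b + 1 := by
  rw [pathSubgraph, fromRel_adj, and_iff_right_iff_imp]
  rintro (⟨-, h⟩ | ⟨-, h⟩) rfl <;> omega

theorem pathSubgraph_le_hasse : pathSubgraph n S ≤ hasse (Fin n) := fun a b h => by
  rw [hasse_adj, Fin.covBy_iff, Fin.covBy_iff, Nat.covBy_iff_add_one_eq,
    Nat.covBy_iff_add_one_eq]
  rcases pathSubgraph_adj.1 h with h | h <;> omega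

/-- Count the least vertices of the components; every other vertex `y` has `y - 1 ∈ S`. -/
theorem le_card_connectedComponent_add_card :
    n ≤ Nat.card (pathSubgraph n S).ConnectedComponent + #S := by
  set T : Set (Fin n) := {y | ∀ w, w ⋖ y → ¬ (pathSubgraph n S).Adj w y}
  have hpred : ∀ y ∈ Tᶜ, 0 < (y : ℕ) ∧ (y : ℕ) - 1 ∈ S := fun y hy => by
    simp only [T, Set.mem_compl_iff, Set.mem_ofPred_eq, not_forall, not_not] at hy
    obtain ⟨w, hw, hadj⟩ := hy
    rw [Fin.covBy_iff, Nat.covBy_iff_add_one_eq] at hw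
    rcases pathSubgraph_adj.1 hadj with ⟨hwS, -⟩ | ⟨-, h⟩
    · exact ⟨by omega, by rwa [← hw, Nat.add_sub_cancel]⟩
    · omega
  have hTc : Tᶜ.ncard ≤ #S := by
    rw [← Set.ncard_coe_finset S]
    refine Set.ncard_le_ncard_of_injOn (fun y : Fin n => (y : ℕ) - 1)
      (fun y hy => (hpred y hy).2) (fun x hx y hy h => Fin.ext ?_)
    have := (hpred x hx).1
    have := (hpred y hy).1
    simp only at h
    omega
  have hT : T.ncard ≤ Nat.card (pathSubgraph n S).ConnectedComponent :=
    ncard_le_card_connectedComponent_of_le_hasse pathSubgraph_le_hasse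
  have hsplit := Set.ncard_add_ncard_compl T
  rw [Nat.card_eq_fintype_card, Fintype.card_fin] at hsplit
  omega

end Graph

def stripe (k t : ℕ) : Bool := decide (t < k ^ 2 ∧ t / k % 2 = 0)

def prefixImbalance (k t : ℕ) : ℤ := ∑ s ∈ range t, signOf (stripe k s)

section Stripes

variable {k : ℕ}

theorem stripe_of_lt (hk : 0 < k) {t : ℕ} (ht : t < k ^ 2) :
    stripe k t = decide (t % (2 * k) < k) := by
  simp only [stripe, ht, true_and, decide_eq_decide]
  rw [← Nat.mod_mul_right_div_self, mul_comm k 2, Nat.div_eq_zero_iff_lt hk]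

theorem prefixImbalance_eq_min (hk : 0 < k) :
    ∀ t ≤ k ^ 2, prefixImbalance k t = (min (t % (2 * k)) (2 * k - t % (2 * k)) : ℕ)
  | 0, _ => by simp [prefixImbalance]
  | t + 1, ht => by
    have hr : t % (2 * k) < 2 * k := Nat.mod_lt _ (by omega)
    have hsucc : (t + 1) % (2 * k) = if 2 * k ≤ t % (2 * k) + 1 then t % (2 * k) + 1 - 2 * k
        else t % (2 * k) + 1 := by
      rw [Nat.add_mod_eq_ite, Nat.one_mod_eq_one.2 (by omega)]
    rw [prefixImbalance, sum_range_succ, ← prefixImbalance,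
      prefixImbalance_eq_min hk t (by omega), stripe_of_lt hk (by omega), hsucc, signOf]
    generalize t % (2 * k) = r at hr ⊢
    split_ifs <;> simp_all <;> omega

theorem prefixImbalance_sq (hk : 0 < k) (hke : Even k) : prefixImbalance k (k ^ 2) = 0 := by
  obtain ⟨m, rfl⟩ := hke
  rw [prefixImbalance_eq_min hk _ le_rfl, show (m + m) ^ 2 = 2 * (m + m) * m by ring,
    Nat.mul_mod_right]
  simp

theorem prefixImbalance_sq_add_one (hk : 0 < k) (hke : Even k) :
    prefixImbalance k (k ^ 2 + 1) = -1 := by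
  rw [prefixImbalance, sum_range_succ, ← prefixImbalance, prefixImbalance_sq hk hke]
  simp [stripe, signOf]

theorem prefixImbalance_mem_Icc (hk : 0 < k) {t : ℕ} (ht : t ≤ k ^ 2) :
    prefixImbalance k t ∈ Set.Icc 0 (k : ℤ) := by
  rw [prefixImbalance_eq_min hk t ht, Set.mem_Icc]
  omega

theorem natAbs_prefixImbalance_sub_le (hk : 0 < k) (hke : Even k) {a b : ℕ} (ha : a ≤ k ^ 2)
    (hb : b ≤ k ^ 2 + 1) : (prefixImbalance k b - prefixImbalance k a).natAbs ≤ k + 1 := by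
  obtain ⟨hFa₀, hFa₁⟩ := prefixImbalance_mem_Icc hk ha
  have hFb : -1 ≤ prefixImbalance k b ∧ prefixImbalance k b ≤ k := by
    rcases hb.lt_or_eq with hb | rfl
    · obtain ⟨hFb₀, hFb₁⟩ := prefixImbalance_mem_Icc hk (Nat.le_of_lt_succ hb)
      omega
    · rw [prefixImbalance_sq_add_one hk hke]
      omega
  omega

theorem exists_eq_mul_of_stripe_ne (hk : 0 < k) (hke : Even k) {t : ℕ} (ht : t + 1 ≤ k ^ 2)
    (h : stripe k t ≠ stripe k (t + 1)) : ∃ j ∈ Set.Icc 1 (k - 1), t + 1 = j * k := by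
  have hsq : k ^ 2 = k * k := sq k
  rcases ht.lt_or_eq with ht | ht
  · have hdvd : k ∣ t + 1 := by
      by_contra hnd
      refine h ?_
      simp only [stripe, Nat.succ_div_of_not_dvd hnd, ht, show t < k ^ 2 by omega, true_and]
    obtain ⟨j, hj⟩ := hdvd
    refine ⟨j, ⟨Nat.pos_of_ne_zero ?_, ?_⟩, hj.trans (mul_comm k j)⟩
    · rintro rfl
      simp at hj
    · have : j < k := Nat.lt_of_mul_lt_mul_left (hj ▸ hsq ▸ ht)
      omega
  · refine absurd ?_ h
    have hdiv : t / k = k - 1 :=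
      Nat.div_eq_of_lt_le (by rw [Nat.sub_mul]; omega) (by rw [Nat.sub_add_cancel hk]; omega)
    have hodd : (k - 1) % 2 = 1 := by obtain ⟨m, rfl⟩ := hke; omega
    simp [stripe, hdiv, hodd, ht]

theorem imbalance_Icc {n : ℕ} {a b : Fin n} (hab : a ≤ b) :
    imbalance (fun x : Fin n => stripe k x) (Set.Icc a b) =
      prefixImbalance k (b + 1) - prefixImbalance k a := by
  rw [← coe_Icc, imbalance_coe_finset, prefixImbalance, prefixImbalance,
    ← sum_Ico_eq_sub _ (by omega), Ico_add_one_right_eq_Icc, ← Fin.map_valEmbedding_Icc,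
    sum_map]
  rfl

end Stripes

section Components

variable {k : ℕ} {S : Finset ℕ}

theorem natAbs_imbalance_supp_le (hk : 0 < k) (hke : Even k)
    (C : (pathSubgraph (k ^ 2 + 1) S).ConnectedComponent) :
    (imbalance (fun x : Fin (k ^ 2 + 1) => stripe k x) C.supp).natAbs ≤ k + 1 := by
  have hIcc := (C.nonempty_supp.ordConnected_iff_of_bdd').1
    (C.ordConnected_supp_of_le_hasse pathSubgraph_le_hasse)
  have hab : sInf C.supp ≤ sSup C.supp := Set.nonempty_Icc.1 (hIcc ▸ C.nonempty_supp)
  rw [hIcc, imbalance_Icc hab]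
  exact natAbs_prefixImbalance_sub_le hk hke (Nat.le_of_lt_succ (sInf C.supp).isLt)
    (sSup C.supp).isLt

theorem ncard_imbalance_eq_zero_le (hk : 0 < k) (hke : Even k) :
    {C : (pathSubgraph (k ^ 2 + 1) S).ConnectedComponent |
      imbalance (fun x : Fin (k ^ 2 + 1) => stripe k x) C.supp = 0}.ncard ≤ k - 1 := by
  set T : Set (Fin (k ^ 2 + 1)) := Fin.val ⁻¹' ((· * k) '' Set.Icc 1 (k - 1))
  have hmeet : ∀ C ∈ {C : (pathSubgraph (k ^ 2 + 1) S).ConnectedComponent |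
      imbalance (fun x : Fin (k ^ 2 + 1) => stripe k x) C.supp = 0}, ∃ v ∈ T, v ∈ C.supp := by
    intro C hC
    obtain ⟨u, hu, v, hv, huv⟩ := exists_ne_of_imbalance_eq_zero C.nonempty_supp hC
    obtain ⟨x, hx, y, hxy, hne⟩ :=
      C.exists_adj_ne (fun x : Fin (k ^ 2 + 1) => stripe k x) hu hv huv
    have hy := (C.mem_supp_congr_adj hxy).1 hx
    rcases pathSubgraph_adj.1 hxy with ⟨-, h⟩ | ⟨-, h⟩
    · obtain ⟨j, hj, e⟩ :=
        exists_eq_mul_of_stripe_ne hk hke (h ▸ Nat.le_of_lt_succ y.isLt) (h ▸ hne)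
      exact ⟨y, ⟨j, hj, by rw [h, e]⟩, hy⟩
    · obtain ⟨j, hj, e⟩ :=
        exists_eq_mul_of_stripe_ne hk hke (h ▸ Nat.le_of_lt_succ x.isLt) (h ▸ hne.symm)
      exact ⟨x, ⟨j, hj, by rw [h, e]⟩, hx⟩
  calc _ ≤ T.ncard :=
        ConnectedComponent.ncard_le_ncard_of_forall_exists_mem_supp (Set.toFinite T) hmeet
    _ ≤ ((· * k) '' Set.Icc 1 (k - 1)).ncard :=
        Set.ncard_le_ncard_of_injOn Fin.val (fun _ h => h) Fin.val_injective.injOn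
    _ ≤ (Set.Icc 1 (k - 1)).ncard := Set.ncard_image_le (Set.finite_Icc _ _)
    _ = k - 1 := by rw [Set.ncard_Icc_nat]; omega

theorem add_one_le_finsum_natAbs_imbalance (hk : 0 < k) (hke : Even k)
    (hS : #S ≤ k ^ 2 + 1 - 2 * k - 2) (C₀ : (pathSubgraph (k ^ 2 + 1) S).ConnectedComponent) :
    k + 1 ≤ ∑ᶠ C ∈ {C | C ≠ C₀},
      (imbalance (fun x : Fin (k ^ 2 + 1) => stripe k x) C.supp).natAbs := by
  have hcomp := le_card_connectedComponent_add_card (n := k ^ 2 + 1) (S := S)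
  have hsum := card_le_ncard_eq_zero_add_one_add_finsum
    (fun C => (imbalance (fun x : Fin (k ^ 2 + 1) => stripe k x) C.supp).natAbs) C₀
  have hzero := ncard_imbalance_eq_zero_le (S := S) hk hke
  simp only [Int.natAbs_eq_zero] at hsum
  have hk2 : 2 * k ≤ k ^ 2 := by
    have : 2 ≤ k := by obtain ⟨m, hm⟩ := hke; omega
    nlinarith
  omega

end Components

end MajorityPath

open MajorityPath in
theorem stmt_12_general (k : ℕ) (hk : 0 < k) (hke : Even k) (n : ℕ) (hn : n = k ^ 2 + 1)
    (c : Fin n → Bool)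
    (hc : ∀ t : Fin n, c t =
      if (t : ℕ) = k ^ 2 then false else decide (((t : ℕ) / k) % 2 = 0))
    (S : Finset ℕ) (hScard : S.card ≤ n - 2 * k - 2)
    (GS : SimpleGraph (Fin n))
    (hGS : GS = SimpleGraph.fromRel (fun a b : Fin n => (a : ℕ) ∈ S ∧ (b : ℕ) = (a : ℕ) + 1)) :
    {C : GS.ConnectedComponent |
        {x | x ∈ C.supp ∧ c x = true}.ncard = {x | x ∈ C.supp ∧ c x = false}.ncard}.ncard
      ≤ k - 1 ∧
    (∀ C : GS.ConnectedComponent,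
        (({x | x ∈ C.supp ∧ c x = true}.ncard : ℤ) -
          ({x | x ∈ C.supp ∧ c x = false}.ncard : ℤ)).natAbs ≤ k + 1) ∧
    (∀ C₀ : GS.ConnectedComponent,
        k + 1 ≤ ∑ᶠ C ∈ {C : GS.ConnectedComponent | C ≠ C₀},
          (({x | x ∈ C.supp ∧ c x = true}.ncard : ℤ) -
            ({x | x ∈ C.supp ∧ c x = false}.ncard : ℤ)).natAbs) := by
  subst hn hGS
  obtain rfl : c = fun x : Fin (k ^ 2 + 1) => stripe k x := funext fun x => by
    rw [hc, stripe]
    split_ifs with h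
    · simp [h]
    · simp [show (x : ℕ) < k ^ 2 by omega]
  refine ⟨?_, natAbs_imbalance_supp_le hk hke, add_one_le_finsum_natAbs_imbalance hk hke hScard⟩
  have hbal := ncard_imbalance_eq_zero_le (S := S) hk hke
  simp only [imbalance_eq_zero_iff] at hbal
  exact hbal

theorem stmt_12 (k : ℕ) (hk : 0 < k) (hke : Even k) (n : ℕ) (hn : n = k ^ 2 + 1)
    (c : Fin n → Bool)
    (hc : ∀ t : Fin n, c t =
      if (t : ℕ) = k ^ 2 then false else decide (((t : ℕ) / k) % 2 = 0))
    (S : Finset ℕ) (hS : S ⊆ Finset.range (n - 1)) (hScard : S.card ≤ n - 2 * k - 2)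
    (GS : SimpleGraph (Fin n))
    (hGS : GS = SimpleGraph.fromRel (fun a b : Fin n => (a : ℕ) ∈ S ∧ (b : ℕ) = (a : ℕ) + 1)) :
    {C : GS.ConnectedComponent |
        {x | x ∈ C.supp ∧ c x = true}.ncard = {x | x ∈ C.supp ∧ c x = false}.ncard}.ncard
      ≤ k - 1 ∧
    (∀ C : GS.ConnectedComponent,
        (({x | x ∈ C.supp ∧ c x = true}.ncard : ℤ) -
          ({x | x ∈ C.supp ∧ c x = false}.ncard : ℤ)).natAbs ≤ k + 1) ∧
    (∀ C₀ : GS.ConnectedComponent,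
        k + 1 ≤ ∑ᶠ C ∈ {C : GS.ConnectedComponent | C ≠ C₀},
          (({x | x ∈ C.supp ∧ c x = true}.ncard : ℤ) -
            ({x | x ∈ C.supp ∧ c x = false}.ncard : ℤ)).natAbs) :=
  stmt_12_general k hk hke n hn c hc S hScard GS hGS
end

section
/- For any graph G and any sequence of pairwise-comparison queries along edges of G, there is a way to answer each query (SAME or DIFF, consistently determining weights of merged components) such that at every stage, every q-component X ⊊ V satisfies: if |X| is odd then w(X) = 1, and if |X| is even then w(X) = 2·δ(X) where δ(X) ∈ {0,1} is the parity of the number of edges between X and V∖X. In particular 0 ≤ w(X) ≤ 2 always. -/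
open SimpleGraph
/-- The graph formed by the first `t` queries. -/
def queryGraph {V : Type*} (q : ℕ → V × V) (t : ℕ) : SimpleGraph V :=
  SimpleGraph.fromEdgeSet ((fun s => s((q s).1, (q s).2)) '' Set.Iio t)

/-- The q-component of `v` after the first `t` queries. -/
def qComp {V : Type*} (q : ℕ → V × V) (t : ℕ) (v : V) : Set V :=
  {x | (queryGraph q t).Reachable v x}

/-- The parity of the number of edges of `G` between `X` and its complement. -/
noncomputable def boundaryParity {V : Type*} (G : SimpleGraph V) (X : Set V) : ℕ :=
  {e ∈ G.edgeSet | ∃ a ∈ X, ∃ b ∉ X, e = s(a, b)}.ncard % 2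



lemma reach_sup_edge {V : Type*} {H : SimpleGraph V} {u w a b : V}
    (h : (H ⊔ SimpleGraph.edge u w).Reachable a b) :
    H.Reachable a b ∨ (H.Reachable a u ∧ H.Reachable w b) ∨
      (H.Reachable a w ∧ H.Reachable u b) := by
  obtain ⟨p⟩ := h
  induction p with
  | nil => exact Or.inl (Reachable.refl _)
  | cons hadj p ih =>
    rename_i x y z
    rcases (sup_adj _ _ _ _).1 hadj with hxy | hxy
    · rcases ih with h | ⟨h1, h2⟩ | ⟨h1, h2⟩
      · exact Or.inl (hxy.reachable.trans h)
      · exact Or.inr (Or.inl ⟨hxy.reachable.trans h1, h2⟩)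
      · exact Or.inr (Or.inr ⟨hxy.reachable.trans h1, h2⟩)
    · rcases (edge_adj u w x y).1 hxy with ⟨⟨hx, hy⟩ | ⟨hx, hy⟩, -⟩
      · subst hx; subst hy
        rcases ih with h | ⟨h1, h2⟩ | ⟨h1, h2⟩
        · exact Or.inr (Or.inl ⟨Reachable.refl _, h⟩)
        · exact Or.inl (h1.symm.trans h2)
        · exact Or.inl h2
      · subst hx; subst hy
        rcases ih with h | ⟨h1, h2⟩ | ⟨h1, h2⟩
        · exact Or.inr (Or.inr ⟨Reachable.refl _, h⟩)
        · exact Or.inl h2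
        · exact Or.inl (h1.symm.trans h2)

lemma queryGraph_zero {V : Type*} (q : ℕ → V × V) : queryGraph q 0 = ⊥ := by
  have h : Set.Iio (0:ℕ) = ∅ := by ext; simp
  simp [queryGraph, h]

lemma queryGraph_succ {V : Type*} (q : ℕ → V × V) (t : ℕ) :
    queryGraph q (t + 1) = queryGraph q t ⊔ SimpleGraph.edge (q t).1 (q t).2 := by
  have h : Set.Iio (t + 1) = insert t (Set.Iio t) := by
    ext x; simp only [Set.mem_Iio, Set.mem_insert_iff]; omega
  rw [queryGraph, queryGraph, h, Set.image_insert_eq,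
    Set.insert_eq, fromEdgeSet_union, sup_comm]
  rfl

lemma reach_mono_succ {V : Type*} {q : ℕ → V × V} {t : ℕ} {a b : V}
    (h : (queryGraph q t).Reachable a b) : (queryGraph q (t + 1)).Reachable a b := by
  rw [queryGraph_succ]; exact h.mono le_sup_left

lemma reach_succ_iff {V : Type*} {q : ℕ → V × V} {t : ℕ} {a b : V} :
    (queryGraph q (t + 1)).Reachable a b ↔
      (queryGraph q t).Reachable a b ∨
      ((queryGraph q t).Reachable a (q t).1 ∧ (queryGraph q t).Reachable (q t).2 b) ∨
      ((queryGraph q t).Reachable a (q t).2 ∧ (queryGraph q t).Reachable (q t).1 b) := by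
  constructor
  · intro h; rw [queryGraph_succ] at h; exact reach_sup_edge h
  · rintro (h | ⟨h1, h2⟩ | ⟨h1, h2⟩)
    · exact reach_mono_succ h
    · rcases eq_or_ne (q t).1 (q t).2 with he | he
      · exact reach_mono_succ (h1.trans (he ▸ h2))
      · refine (reach_mono_succ h1).trans (Reachable.trans ?_ (reach_mono_succ h2))
        rw [queryGraph_succ]
        exact SimpleGraph.Adj.reachable (by simp [SimpleGraph.edge_adj, he])
    · rcases eq_or_ne (q t).1 (q t).2 with he | he
      · exact reach_mono_succ (h1.trans (he ▸ h2))
      · refine (reach_mono_succ h1).trans (Reachable.trans ?_ (reach_mono_succ h2))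
        rw [queryGraph_succ]
        exact SimpleGraph.Adj.reachable (by simp [SimpleGraph.edge_adj, he.symm])

/-- untouched vertex: component unchanged -/
lemma qComp_succ_untouched {V : Type*} {q : ℕ → V × V} {t : ℕ} {v : V}
    (h1 : ¬ (queryGraph q t).Reachable v (q t).1)
    (h2 : ¬ (queryGraph q t).Reachable v (q t).2) :
    qComp q (t + 1) v = qComp q t v := by
  ext x
  simp only [qComp, Set.mem_setOf_eq, reach_succ_iff]
  tauto

/-- already-connected case: all components unchanged -/
lemma qComp_succ_reach {V : Type*} {q : ℕ → V × V} {t : ℕ}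
    (h : (queryGraph q t).Reachable (q t).1 (q t).2) (v : V) :
    qComp q (t + 1) v = qComp q t v := by
  ext x
  simp only [qComp, Set.mem_setOf_eq, reach_succ_iff]
  constructor
  · rintro (hh | ⟨hh1, hh2⟩ | ⟨hh1, hh2⟩)
    · exact hh
    · exact (hh1.trans h).trans hh2
    · exact (hh1.trans h.symm).trans hh2
  · exact Or.inl

/-- touched vertex: component becomes the union -/
lemma qComp_succ_touched {V : Type*} {q : ℕ → V × V} {t : ℕ} {v : V}
    (h : (queryGraph q t).Reachable v (q t).1 ∨ (queryGraph q t).Reachable v (q t).2) :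
    qComp q (t + 1) v = qComp q t (q t).1 ∪ qComp q t (q t).2 := by
  ext x
  simp only [qComp, Set.mem_setOf_eq, reach_succ_iff, Set.mem_union]
  rcases h with h | h
  · constructor
    · rintro (hh | ⟨hh1, hh2⟩ | ⟨hh1, hh2⟩)
      · exact Or.inl (h.symm.trans hh)
      · exact Or.inr hh2
      · exact Or.inl hh2
    · rintro (hh | hh)
      · exact Or.inl (h.trans hh)
      · exact Or.inr (Or.inl ⟨h, hh⟩)
  · constructor
    · rintro (hh | ⟨hh1, hh2⟩ | ⟨hh1, hh2⟩)
      · exact Or.inr (h.symm.trans hh)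
      · exact Or.inr hh2
      · exact Or.inl hh2
    · rintro (hh | hh)
      · exact Or.inr (Or.inr ⟨h, hh⟩)
      · exact Or.inl (h.trans hh)

lemma qComp_zero {V : Type*} (q : ℕ → V × V) (v : V) : qComp q 0 v = {v} := by
  ext x
  simp [qComp, queryGraph_zero, SimpleGraph.reachable_bot, eq_comm]
def crossE {V : Type*} (G : SimpleGraph V) (P Q : Set V) : Set (Sym2 V) :=
  {e ∈ G.edgeSet | ∃ a ∈ P, ∃ b ∈ Q, e = s(a, b)}

lemma crossE_comm {V : Type*} (G : SimpleGraph V) (P Q : Set V) :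
    crossE G P Q = crossE G Q P := by
  ext e
  constructor
  · rintro ⟨he, a, ha, b, hb, rfl⟩
    exact ⟨he, b, hb, a, ha, Sym2.eq_swap⟩
  · rintro ⟨he, a, ha, b, hb, rfl⟩
    exact ⟨he, b, hb, a, ha, Sym2.eq_swap⟩

lemma crossE_disj {V : Type*} (G : SimpleGraph V) {P Q P' Q' : Set V}
    (hQQ : Disjoint Q Q') (hPQ : Disjoint P Q') :
    Disjoint (crossE G P Q) (crossE G P' Q') := by
  rw [Set.disjoint_left]
  rintro e ⟨he, a, ha, b, hb, rfl⟩ ⟨he', a', ha', b', hb', heq⟩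
  rcases Sym2.eq_iff.1 heq with ⟨h1, h2⟩ | ⟨h1, h2⟩
  · exact Set.disjoint_left.mp hQQ hb (h2 ▸ hb')
  · exact Set.disjoint_left.mp hPQ ha (h1 ▸ hb')

lemma crossE_union_left {V : Type*} (G : SimpleGraph V) (P Q R : Set V) :
    crossE G (P ∪ Q) R = crossE G P R ∪ crossE G Q R := by
  ext e
  simp only [crossE, Set.mem_union, Set.mem_setOf_eq, Set.mem_sep_iff]
  constructor
  · rintro ⟨he, a, (ha | ha), b, hb, rfl⟩
    · exact Or.inl ⟨he, a, ha, b, hb, rfl⟩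
    · exact Or.inr ⟨he, a, ha, b, hb, rfl⟩
  · rintro (⟨he, a, ha, b, hb, rfl⟩ | ⟨he, a, ha, b, hb, rfl⟩)
    · exact ⟨he, a, Or.inl ha, b, hb, rfl⟩
    · exact ⟨he, a, Or.inr ha, b, hb, rfl⟩

lemma crossE_congr_right {V : Type*} (G : SimpleGraph V) (P : Set V) {Q R : Set V}
    (h : Q = R) : crossE G P Q = crossE G P R := by rw [h]

lemma bd_eq_crossE {V : Type*} (G : SimpleGraph V) (X : Set V) :
    {e ∈ G.edgeSet | ∃ a ∈ X, ∃ b ∉ X, e = s(a, b)} = crossE G X Xᶜ := rfl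

lemma bp_lt_two {V : Type*} (G : SimpleGraph V) (X : Set V) :
    boundaryParity G X < 2 := Nat.mod_lt _ (by norm_num)

lemma bp_union {V : Type*} [Fintype V] (G : SimpleGraph V) {X Y : Set V}
    (hXY : Disjoint X Y) :
    boundaryParity G (X ∪ Y) = (boundaryParity G X + boundaryParity G Y) % 2 := by
  classical
  have hfin : ∀ S : Set (Sym2 V), S.Finite := fun S => S.toFinite
  have hXc : Xᶜ = Y ∪ (X ∪ Y)ᶜ := by
    ext b
    simp only [Set.mem_compl_iff, Set.mem_union]
    constructor
    · intro hb
      by_cases hbY : b ∈ Y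
      · exact Or.inl hbY
      · exact Or.inr (by simp [hb, hbY])
    · rintro (hb | hb)
      · exact fun hbX => Set.disjoint_left.mp hXY hbX hb
      · intro hbX; exact hb (Or.inl hbX)
  have hYc : Yᶜ = X ∪ (X ∪ Y)ᶜ := by
    ext b
    simp only [Set.mem_compl_iff, Set.mem_union]
    constructor
    · intro hb
      by_cases hbX : b ∈ X
      · exact Or.inl hbX
      · exact Or.inr (by simp [hb, hbX])
    · rintro (hb | hb)
      · exact fun hbY => Set.disjoint_left.mp hXY hb hbY
      · intro hbY; exact hb (Or.inr hbY)
  have hdYZ : Disjoint Y (X ∪ Y)ᶜ := by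
    rw [Set.disjoint_compl_right_iff_subset]; exact Set.subset_union_right
  have hdXZ : Disjoint X (X ∪ Y)ᶜ := by
    rw [Set.disjoint_compl_right_iff_subset]; exact Set.subset_union_left
  have eX : {e ∈ G.edgeSet | ∃ a ∈ X, ∃ b ∉ X, e = s(a, b)}
      = crossE G X Y ∪ crossE G X (X ∪ Y)ᶜ := by
    rw [bd_eq_crossE, crossE_congr_right G X hXc]
    ext e
    simp only [crossE, Set.mem_union, Set.mem_setOf_eq, Set.mem_sep_iff]
    constructor
    · rintro ⟨he, a, ha, b, (hb | hb), rfl⟩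
      · exact Or.inl ⟨he, a, ha, b, hb, rfl⟩
      · exact Or.inr ⟨he, a, ha, b, hb, rfl⟩
    · rintro (⟨he, a, ha, b, hb, rfl⟩ | ⟨he, a, ha, b, hb, rfl⟩)
      · exact ⟨he, a, ha, b, Or.inl hb, rfl⟩
      · exact ⟨he, a, ha, b, Or.inr hb, rfl⟩
  have eY : {e ∈ G.edgeSet | ∃ a ∈ Y, ∃ b ∉ Y, e = s(a, b)}
      = crossE G X Y ∪ crossE G Y (X ∪ Y)ᶜ := by
    rw [bd_eq_crossE, crossE_congr_right G Y hYc]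
    ext e
    simp only [crossE, Set.mem_union, Set.mem_setOf_eq, Set.mem_sep_iff]
    constructor
    · rintro ⟨he, a, ha, b, (hb | hb), rfl⟩
      · exact Or.inl ⟨he, b, hb, a, ha, Sym2.eq_swap⟩
      · exact Or.inr ⟨he, a, ha, b, hb, rfl⟩
    · rintro (⟨he, a, ha, b, hb, rfl⟩ | ⟨he, a, ha, b, hb, rfl⟩)
      · exact ⟨he, b, hb, a, Or.inl ha, Sym2.eq_swap⟩
      · exact ⟨he, a, ha, b, Or.inr hb, rfl⟩
  have eZ : {e ∈ G.edgeSet | ∃ a ∈ X ∪ Y, ∃ b ∉ X ∪ Y, e = s(a, b)}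
      = crossE G X (X ∪ Y)ᶜ ∪ crossE G Y (X ∪ Y)ᶜ := by
    rw [bd_eq_crossE, crossE_union_left]
  have d1 : Disjoint (crossE G X Y) (crossE G X (X ∪ Y)ᶜ) :=
    crossE_disj G hdYZ hdXZ
  have d2 : Disjoint (crossE G X Y) (crossE G Y (X ∪ Y)ᶜ) :=
    crossE_disj G hdYZ hdXZ
  have d3 : Disjoint (crossE G X (X ∪ Y)ᶜ) (crossE G Y (X ∪ Y)ᶜ) := by
    rw [crossE_comm G Y]
    exact crossE_disj G hdYZ.symm hXY
  have nX := Set.ncard_union_eq d1 (hfin _) (hfin _)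
  have nY := Set.ncard_union_eq d2 (hfin _) (hfin _)
  have nZ := Set.ncard_union_eq d3 (hfin _) (hfin _)
  rw [boundaryParity, boundaryParity, boundaryParity, eX, eY, eZ, nX, nY, nZ]
  omega

open Classical in
noncomputable def Wfun {V : Type*} (G : SimpleGraph V) (q : ℕ → V × V) : ℕ → V → ℕ
  | 0 => fun _ => 1
  | (t + 1) => fun v =>
    if (queryGraph q t).Reachable (q t).1 (q t).2 then Wfun G q t v
    else if (queryGraph q t).Reachable v (q t).1 ∨ (queryGraph q t).Reachable v (q t).2 then
      if Odd (qComp q t (q t).1).ncard ∧ Odd (qComp q t (q t).2).ncard ∧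
          boundaryParity G (qComp q t (q t).1 ∪ qComp q t (q t).2) = 1 then
        Wfun G q t (q t).1 + Wfun G q t (q t).2
      else ((Wfun G q t (q t).1 : ℤ) - (Wfun G q t (q t).2 : ℤ)).natAbs
    else Wfun G q t v

section Wlem
variable {V : Type*} {G : SimpleGraph V} {q : ℕ → V × V} {t : ℕ} {v : V}

lemma Wfun_zero : Wfun G q 0 v = 1 := rfl

lemma Wfun_succ_reach (hr : (queryGraph q t).Reachable (q t).1 (q t).2) :
    Wfun G q (t + 1) v = Wfun G q t v := by
  simp only [Wfun, if_pos hr]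

lemma Wfun_succ_untouched (hr : ¬ (queryGraph q t).Reachable (q t).1 (q t).2)
    (h1 : ¬ (queryGraph q t).Reachable v (q t).1)
    (h2 : ¬ (queryGraph q t).Reachable v (q t).2) :
    Wfun G q (t + 1) v = Wfun G q t v := by
  simp only [Wfun, if_neg hr]
  rw [if_neg (by tauto)]

lemma Wfun_succ_touched (hr : ¬ (queryGraph q t).Reachable (q t).1 (q t).2)
    (hv : (queryGraph q t).Reachable v (q t).1 ∨ (queryGraph q t).Reachable v (q t).2) :
    Wfun G q (t + 1) v =
      if Odd (qComp q t (q t).1).ncard ∧ Odd (qComp q t (q t).2).ncard ∧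
          boundaryParity G (qComp q t (q t).1 ∪ qComp q t (q t).2) = 1 then
        Wfun G q t (q t).1 + Wfun G q t (q t).2
      else ((Wfun G q t (q t).1 : ℤ) - (Wfun G q t (q t).2 : ℤ)).natAbs := by
  simp only [Wfun, if_neg hr]
  rw [if_pos hv]

end Wlem

lemma mem_qComp {V : Type*} {q : ℕ → V × V} {t : ℕ} {v x : V} :
    x ∈ qComp q t v ↔ (queryGraph q t).Reachable v x := Iff.rfl

lemma Wfun_inv {V : Type*} [Fintype V] (G : SimpleGraph V) (q : ℕ → V × V) :
    ∀ t (v : V), qComp q t v ≠ Set.univ →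
      (Odd (qComp q t v).ncard → Wfun G q t v = 1) ∧
      (Even (qComp q t v).ncard → Wfun G q t v = 2 * boundaryParity G (qComp q t v)) ∧
      Wfun G q t v ≤ 2 := by
  classical
  intro t
  induction t with
  | zero =>
    intro v _
    rw [qComp_zero, Set.ncard_singleton, Wfun_zero]
    refine ⟨fun _ => rfl, fun h => absurd h (by decide), by norm_num⟩
  | succ t ih =>
    intro v huniv
    by_cases hr : (queryGraph q t).Reachable (q t).1 (q t).2
    · rw [qComp_succ_reach hr] at huniv ⊢
      rw [Wfun_succ_reach hr]
      exact ih v huniv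
    · by_cases hv : (queryGraph q t).Reachable v (q t).1 ∨
          (queryGraph q t).Reachable v (q t).2
      · -- merge case
        rw [qComp_succ_touched hv] at huniv ⊢
        rw [Wfun_succ_touched hr hv]
        set X := qComp q t (q t).1 with hX
        set Y := qComp q t (q t).2 with hY
        have hdisj : Disjoint X Y := by
          rw [Set.disjoint_left]
          intro x hx hy
          exact hr ((mem_qComp.1 hx).trans (mem_qComp.1 hy).symm)
        have hXuniv : X ≠ Set.univ := by
          intro h
          exact hr (mem_qComp.1 (h ▸ Set.mem_univ (q t).2 : (q t).2 ∈ X))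
        have hYuniv : Y ≠ Set.univ := by
          intro h
          exact hr (mem_qComp.1 (h ▸ Set.mem_univ (q t).1 : (q t).1 ∈ Y)).symm
        obtain ⟨IH1o, IH1e, IH1le⟩ := ih (q t).1 hXuniv
        obtain ⟨IH2o, IH2e, IH2le⟩ := ih (q t).2 hYuniv
        have hncard : (X ∪ Y).ncard = X.ncard + Y.ncard :=
          Set.ncard_union_eq hdisj (Set.toFinite _) (Set.toFinite _)
        have hbp := bp_union G hdisj
        have hbpZ := bp_lt_two G (X ∪ Y)
        have hbpX := bp_lt_two G X
        have hbpY := bp_lt_two G Y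
        rcases Nat.even_or_odd X.ncard with hxe | hxo
        · -- X even : not the SAME case
          have hC : ¬ (Odd X.ncard ∧ Odd Y.ncard ∧
              boundaryParity G (X ∪ Y) = 1) := by
            rintro ⟨h1, -, -⟩; exact (Nat.not_odd_iff_even.mpr hxe) h1
          rw [if_neg hC]
          have hw1 : Wfun G q t (q t).1 = 2 * boundaryParity G X := IH1e hxe
          rcases Nat.even_or_odd Y.ncard with hye | hyo
          · -- even even
            have hw2 : Wfun G q t (q t).2 = 2 * boundaryParity G Y := IH2e hye
            rw [hw1, hw2]
            rw [Nat.even_iff] at hxe hye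
            refine ⟨fun ho => ?_, fun _ => ?_, ?_⟩
            · rw [Nat.odd_iff, hncard] at ho; omega
            · rw [hbp]
              interval_cases h1 : boundaryParity G X <;>
                interval_cases h2 : boundaryParity G Y <;> simp
            · interval_cases h1 : boundaryParity G X <;>
                interval_cases h2 : boundaryParity G Y <;> simp
          · -- even odd
            have hw2 : Wfun G q t (q t).2 = 1 := IH2o hyo
            rw [hw1, hw2]
            rw [Nat.even_iff] at hxe
            rw [Nat.odd_iff] at hyo
            refine ⟨fun _ => ?_, fun he => ?_, ?_⟩
            · interval_cases h1 : boundaryParity G X <;> simp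
            · rw [Nat.even_iff, hncard] at he; omega
            · interval_cases h1 : boundaryParity G X <;> simp
        · have hw1 : Wfun G q t (q t).1 = 1 := IH1o hxo
          rcases Nat.even_or_odd Y.ncard with hye | hyo
          · -- odd even
            have hC : ¬ (Odd X.ncard ∧ Odd Y.ncard ∧
                boundaryParity G (X ∪ Y) = 1) := by
              rintro ⟨-, h2, -⟩; exact (Nat.not_odd_iff_even.mpr hye) h2
            rw [if_neg hC]
            have hw2 : Wfun G q t (q t).2 = 2 * boundaryParity G Y := IH2e hye
            rw [hw1, hw2]
            rw [Nat.even_iff] at hye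
            rw [Nat.odd_iff] at hxo
            refine ⟨fun _ => ?_, fun he => ?_, ?_⟩
            · interval_cases h2 : boundaryParity G Y <;> simp
            · rw [Nat.even_iff, hncard] at he; omega
            · interval_cases h2 : boundaryParity G Y <;> simp
          · -- odd odd
            have hw2 : Wfun G q t (q t).2 = 1 := IH2o hyo
            rw [Nat.odd_iff] at hxo hyo
            by_cases hb : boundaryParity G (X ∪ Y) = 1
            · rw [if_pos ⟨Nat.odd_iff.mpr hxo, Nat.odd_iff.mpr hyo, hb⟩, hw1, hw2]
              refine ⟨fun ho => ?_, fun _ => by rw [hb], by norm_num⟩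
              rw [Nat.odd_iff, hncard] at ho; omega
            · have hb0 : boundaryParity G (X ∪ Y) = 0 := by omega
              rw [if_neg (by tauto), hw1, hw2]
              refine ⟨fun ho => ?_, fun _ => by rw [hb0]; simp, by simp⟩
              rw [Nat.odd_iff, hncard] at ho; omega
      · push_neg at hv
        rw [qComp_succ_untouched hv.1 hv.2] at huniv ⊢
        rw [Wfun_succ_untouched hr hv.1 hv.2]
        exact ih v huniv

theorem stmt_15 {V : Type*} [Fintype V] [DecidableEq V] (G : SimpleGraph V)
    (q : ℕ → V × V) (hq : ∀ t, G.Adj (q t).1 (q t).2) :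
    ∃ W : ℕ → V → ℕ,
      (∀ v, W 0 v = 1) ∧
      (∀ t,
        ((queryGraph q t).Reachable (q t).1 (q t).2 → ∀ v, W (t + 1) v = W t v) ∧
        (¬ (queryGraph q t).Reachable (q t).1 (q t).2 →
          (∀ v, ¬ (queryGraph q t).Reachable v (q t).1 →
            ¬ (queryGraph q t).Reachable v (q t).2 → W (t + 1) v = W t v) ∧
          ((∀ v, ((queryGraph q t).Reachable v (q t).1 ∨
              (queryGraph q t).Reachable v (q t).2) →
              W (t + 1) v = W t (q t).1 + W t (q t).2) ∨
           (∀ v, ((queryGraph q t).Reachable v (q t).1 ∨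
              (queryGraph q t).Reachable v (q t).2) →
              W (t + 1) v = ((W t (q t).1 : ℤ) - (W t (q t).2 : ℤ)).natAbs)))) ∧
      (∀ t (v : V), qComp q t v ≠ Set.univ →
        (Odd (qComp q t v).ncard → W t v = 1) ∧
        (Even (qComp q t v).ncard → W t v = 2 * boundaryParity G (qComp q t v)) ∧
        W t v ≤ 2) := by
  refine ⟨Wfun G q, fun v => rfl, fun t => ⟨fun hr v => Wfun_succ_reach hr, fun hnr => ?_⟩,
    Wfun_inv G q⟩
  refine ⟨fun v h1 h2 => Wfun_succ_untouched hnr h1 h2, ?_⟩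
  by_cases hC : Odd (qComp q t (q t).1).ncard ∧ Odd (qComp q t (q t).2).ncard ∧
      boundaryParity G (qComp q t (q t).1 ∪ qComp q t (q t).2) = 1
  · exact Or.inl (fun v hv => by rw [Wfun_succ_touched hnr hv, if_pos hC])
  · exact Or.inr (fun v hv => by rw [Wfun_succ_touched hnr hv, if_neg hC])
end
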